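/- A closed λ-term T is a storage operator if and only if for every n ≥ 0 there is a finite sequence of head reductions {Uᵢ ≻ Vᵢ}_{1≤i≤r} of λx-terms such that: U₁ = (T)xₙ f and V_r = (f)τₙ where τₙ is a closed λ-term β-equivalent to n̄; for i < r, Vᵢ has the form (xₙ)a b c̄ or (x_{l,a,b,c̄})d̄ with 0 ≤ l ≤ n−1; if Vᵢ = (xₙ)a b c̄ then U_{i+1} = (b)c̄ when n = 0 and U_{i+1} = ((a)x_{n−1,a,b,c̄})c̄ when n ≠ 0; and if Vᵢ = (x_{l,a,b,c̄})d̄ then U_{i+1} = (b)d̄ when l = 0 and U_{i+1} = ((a)x_{l−1,a,b,d̄})d̄ when l ≠ 0. -/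
import Mathlib



namespace SO

/-- Untyped λ-terms in de Bruijn notation (modulo α-equivalence). -/
inductive Term : Type
  | var : ℕ → Term
  | lam : Term → Term
  | app : Term → Term → Term
deriving DecidableEq

namespace Term

/-- Shift the free variables `≥ c` up by one. -/
def lift (c : ℕ) : Term → Term
  | var i => if i < c then var i else var (i + 1)
  | lam t => lam (lift (c + 1) t)
  | app t u => app (lift c t) (lift c u)

/-- Substitute `s` for the free variable `j`. -/
def subst (j : ℕ) (s : Term) : Term → Term
  | var i => if i = j then s else if j < i then var (i - 1) else var i
  | lam t => lam (subst (j + 1) (lift 0 s) t)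
  | app t u => app (subst j s t) (subst j s u)

/-- One step of β-reduction (anywhere in the term). -/
inductive Beta : Term → Term → Prop
  | beta : Beta (app (lam t) u) (subst 0 u t)
  | appL : Beta t t' → Beta (app t u) (app t' u)
  | appR : Beta u u' → Beta (app t u) (app t u')
  | lam : Beta t t' → Beta (lam t) (lam t')

/-- β-equivalence `u ≃β v`. -/
def BetaEq : Term → Term → Prop := Relation.EqvGen Beta

/-- One step of head reduction: a term `λx₁…λxₙ (λx u)v w̄` reduces its head redex. -/
inductive HeadStep : Term → Term → Prop
  | beta : HeadStep (app (lam t) u) (subst 0 u t)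
  | app : HeadStep (app t u) w → HeadStep (app (app t u) v) (app w v)
  | lam : HeadStep t t' → HeadStep (lam t) (lam t')

/-- `u ≻ v` : `v` is obtained from `u` by finitely many head-reduction steps. -/
def HeadRed : Term → Term → Prop := Relation.ReflTransGen HeadStep

/-- Head normal form: no head-reduction step applies. -/
def IsHNF (t : Term) : Prop := ∀ u, ¬ HeadStep t u

/-- `t` is solvable iff the head reduction of `t` terminates. -/
def Solvable (t : Term) : Prop := ∃ u, HeadRed t u ∧ IsHNF u

/-- `FreeIn k t` : the variable (de Bruijn index) `k` occurs free in `t`. -/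
def FreeIn (k : ℕ) : Term → Prop
  | var i => i = k
  | lam t => FreeIn (k + 1) t
  | app t u => FreeIn k t ∨ FreeIn k u

/-- A term is closed iff it has no free variables. -/
def Closed (t : Term) : Prop := ∀ k, ¬ FreeIn k t

/-- `(u)^n v` : `u` applied `n` times to `v`. -/
def iterApp (u : Term) : ℕ → Term → Term
  | 0, v => v
  | n + 1, v => app u (iterApp u n v)

/-- The Church integer `n̄ = λf λx (f)^n x`. -/
def church (n : ℕ) : Term := lam (lam (iterApp (var 1) n (var 0)))

/-- A closed λ-term `S` is a successor iff `(S)k̄ ≃β (k+1)‾` for every `k`. -/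
def IsSuccessor (S : Term) : Prop :=
  Closed S ∧ ∀ k : ℕ, BetaEq (app S (church k)) (church (k + 1))

/-- A closed λ-term `T` is a storage operator iff for every `n ≥ 0` there is a closed
`τₙ ≃β n̄` such that for every `θₙ ≃β n̄` and fresh variable `f`,
`(T)θₙ f ≻ (f)τₙ`. -/
def IsStorageOp (T : Term) : Prop :=
  Closed T ∧ ∀ n : ℕ, ∃ τ : Term, Closed τ ∧ BetaEq τ (church n) ∧
    ∀ (θ : Term) (f : ℕ), BetaEq θ (church n) → ¬ FreeIn f θ →
      HeadRed (app (app T θ) (var f)) (app (var f) τ)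

end Term

end SO

namespace SO

inductive XT : Type
  | var : ℕ → XT
  | const : ℕ → XT
  | lam : XT → XT
  | app : XT → XT → XT
  | cconst : ℕ → XT → XT → List XT → XT

namespace XT

mutual
/-- Shift the free variables `≥ c` up by one. -/
def lift (c : ℕ) : XT → XT
  | var i => if i < c then var i else var (i + 1)
  | const n => const n
  | lam t => lam (lift (c + 1) t)
  | app t u => app (lift c t) (lift c u)
  | cconst n a b cs => cconst n (lift c a) (lift c b) (liftList c cs)

def liftList (c : ℕ) : List XT → List XT
  | [] => []
  | t :: ts => lift c t :: liftList c ts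
end

mutual
def subst (j : ℕ) (s : XT) : XT → XT
  | var i => if i = j then s else if j < i then var (i - 1) else var i
  | const n => const n
  | lam t => lam (subst (j + 1) (lift 0 s) t)
  | app t u => app (subst j s t) (subst j s u)
  | cconst n a b cs => cconst n (subst j s a) (subst j s b) (substList j s cs)

def substList (j : ℕ) (s : XT) : List XT → List XT
  | [] => []
  | t :: ts => subst j s t :: substList j s ts
end

inductive HeadStep : XT → XT → Prop
  | beta : HeadStep (app (lam t) u) (subst 0 u t)
  | app : HeadStep (app t u) w → HeadStep (app (app t u) v) (app w v)
  | lam : HeadStep t t' → HeadStep (lam t) (lam t')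

def HeadRed : XT → XT → Prop := Relation.ReflTransGen HeadStep

/-- `(h) c₁ … cₖ` : `h` applied to the sequence `cs`. -/
def spine (h : XT) (cs : List XT) : XT := cs.foldl app h

end XT

/-- the canonical embedding of λ-terms into λX-terms -/
def Term.toXT : Term → XT
  | .var i => .var i
  | .lam t => .lam t.toXT
  | .app t u => .app t.toXT u.toXT

end SO

namespace SO

open Term

/-- `T` admits, for every `n`, a finite sequence of head reductions `{Uᵢ ≻ Vᵢ}₁≤i≤r`
of λx-terms with: `U₁ = (T)xₙ f`, `V_r = (f)τₙ` for some closed `τₙ ≃β n̄`; for `i < r`,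
`Vᵢ = (xₙ)a b c̄` or `Vᵢ = (x_{l,a,b,c̄})d̄` with `0 ≤ l ≤ n-1`; if `Vᵢ = (xₙ)a b c̄` then
`U_{i+1} = (b)c̄` when `n = 0` and `U_{i+1} = ((a)x_{n-1,a,b,c̄})c̄` when `n ≠ 0`; and if
`Vᵢ = (x_{l,a,b,c̄})d̄` then `U_{i+1} = (b)d̄` when `l = 0` and
`U_{i+1} = ((a)x_{l-1,a,b,d̄})d̄` when `l ≠ 0`. -/
def StorageSeqx (T : Term) : Prop :=
  ∀ (n : ℕ) (f : ℕ), ∃ (r : ℕ) (U V : ℕ → XT) (τ : Term),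
    1 ≤ r ∧ Closed τ ∧ BetaEq τ (church n) ∧
    U 1 = .app (.app T.toXT (.const n)) (.var f) ∧
    V r = .app (.var f) τ.toXT ∧
    (∀ i, 1 ≤ i → i ≤ r → XT.HeadRed (U i) (V i)) ∧
    (∀ i, 1 ≤ i → i < r →
      (∃ a b cs, V i = XT.spine (.app (.app (.const n) a) b) cs ∧
        (n = 0 → U (i + 1) = XT.spine b cs) ∧
        ∀ m, n = m + 1 → U (i + 1) = XT.spine (.app a (.cconst m a b cs)) cs)
      ∨
      (∃ l a b cs ds, l < n ∧ V i = XT.spine (.cconst l a b cs) ds ∧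
        (l = 0 → U (i + 1) = XT.spine b ds) ∧
        ∀ m, l = m + 1 → U (i + 1) = XT.spine (.app a (.cconst m a b ds)) ds))

end SO

open SO Term
namespace SO
namespace Term

/-! ### de Bruijn substitution lemmas -/

theorem lift_lift (t : Term) : ∀ {c c' : ℕ}, c' ≤ c →
    lift (c+1) (lift c' t) = lift c' (lift c t) := by
  induction t with
  | var i =>
      intro c c' h
      simp only [lift]
      split_ifs <;> simp only [lift] <;> (try split_ifs) <;>
        first | rfl | (exfalso; omega) | (congr 1; omega)
  | lam t ih => intro c c' h; simp only [lift]; rw [ih (by omega)]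
  | app t u iht ihu => intro c c' h; simp only [lift, iht h, ihu h]

theorem subst_lift (t : Term) : ∀ {j : ℕ} {s : Term}, subst j s (lift j t) = t := by
  induction t with
  | var i =>
      intro j s
      simp only [lift]
      split_ifs <;> simp only [subst] <;> (try split_ifs) <;>
        first | rfl | (exfalso; omega) | (congr 1; omega)
  | lam t ih => intro j s; simp only [lift, subst, ih]
  | app t u iht ihu => intro j s; simp only [lift, subst, iht, ihu]

theorem lift_subst_le (t : Term) : ∀ {c j : ℕ} {s : Term}, j ≤ c →
    lift c (subst j s t) = subst j (lift c s) (lift (c+1) t) := by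
  induction t with
  | var i =>
      intro c j s h
      simp only [subst, lift]
      split_ifs <;> simp only [subst, lift] <;> (try split_ifs) <;>
        first | rfl | (exfalso; omega) | (congr 1; omega)
  | lam t ih =>
      intro c j s h
      simp only [lift, subst]
      rw [ih (by omega : j + 1 ≤ c + 1), lift_lift s (Nat.zero_le c)]
  | app t u iht ihu => intro c j s h; simp only [lift, subst, iht h, ihu h]

theorem lift_subst_ge (t : Term) : ∀ {c j : ℕ} {s : Term}, c ≤ j →
    lift c (subst j s t) = subst (j+1) (lift c s) (lift c t) := by
  induction t with
  | var i =>
      intro c j s h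
      simp only [subst, lift]
      split_ifs <;> simp only [subst, lift] <;> (try split_ifs) <;>
        first | rfl | (exfalso; omega) | (congr 1; omega)
  | lam t ih =>
      intro c j s h
      simp only [lift, subst]
      rw [ih (by omega : c + 1 ≤ j + 1), lift_lift s (Nat.zero_le c)]
  | app t u iht ihu => intro c j s h; simp only [lift, subst, iht h, ihu h]

theorem subst_subst (t : Term) : ∀ {i j : ℕ} {u s : Term}, i ≤ j →
    subst j s (subst i u t) =
      subst i (subst j s u) (subst (j+1) (lift i s) t) := by
  induction t with
  | var k =>
      intro i j u s h
      simp only [subst]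
      split_ifs <;> simp only [subst, subst_lift] <;> (try split_ifs) <;>
        first | rfl | (exfalso; omega) | (congr 1; omega)
  | lam t ih =>
      intro i j u s h
      simp only [subst]
      rw [ih (by omega : i + 1 ≤ j + 1),
        lift_subst_ge u (Nat.zero_le j), lift_lift s (Nat.zero_le i)]
  | app t u iht ihu => intro i j u' s h; simp only [subst, iht h, ihu h]

end Term
end SO
namespace SO
namespace Term

/-! ### free variables -/

/-- all free variables of `t` are `< m`. -/
def FB (m : ℕ) (t : Term) : Prop := ∀ k, FreeIn k t → k < m

theorem fb_lam {m : ℕ} {t : Term} (h : FB m (lam t)) : FB (m+1) t := by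
  intro k hk
  cases k with
  | zero => omega
  | succ k => have := h k hk; omega

theorem fb_app_left {m : ℕ} {t u : Term} (h : FB m (app t u)) : FB m t :=
  fun k hk => h k (Or.inl hk)

theorem fb_app_right {m : ℕ} {t u : Term} (h : FB m (app t u)) : FB m u :=
  fun k hk => h k (Or.inr hk)

theorem lift_of_fb {t : Term} : ∀ {m c : ℕ}, FB m t → m ≤ c → lift c t = t := by
  induction t with
  | var i =>
      intro m c h hc
      have := h i rfl
      simp only [lift, if_pos (by omega : i < c)]
  | lam t ih =>
      intro m c h hc
      simp only [lam.injEq, lift]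
      exact ih (fb_lam h) (by omega)
  | app t u iht ihu =>
      intro m c h hc
      simp only [lift, app.injEq]
      exact ⟨iht (fb_app_left h) hc, ihu (fb_app_right h) hc⟩

theorem subst_of_fb {t : Term} : ∀ {m j : ℕ} {s : Term}, FB m t → m ≤ j → subst j s t = t := by
  induction t with
  | var i =>
      intro m j s h hj
      have := h i rfl
      simp only [subst, if_neg (by omega : ¬ i = j), if_neg (by omega : ¬ j < i)]
  | lam t ih =>
      intro m j s h hj
      simp only [subst, lam.injEq]
      exact ih (fb_lam h) (by omega)
  | app t u iht ihu =>
      intro m j s h hj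
      simp only [subst, app.injEq]
      exact ⟨iht (fb_app_left h) hj, ihu (fb_app_right h) hj⟩

theorem closed_iff_fb {t : Term} : Closed t ↔ FB 0 t := by
  constructor
  · intro h k hk; exact absurd hk (h k)
  · intro h k hk; have := h k hk; omega

theorem lift_of_closed {t : Term} (h : Closed t) (c : ℕ) : lift c t = t :=
  lift_of_fb (closed_iff_fb.1 h) (Nat.zero_le c)

theorem subst_of_closed {t : Term} (h : Closed t) (j : ℕ) (s : Term) : subst j s t = t :=
  subst_of_fb (closed_iff_fb.1 h) (Nat.zero_le j)

theorem fb_church (n : ℕ) : FB 0 (church n) := by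
  intro k hk
  exfalso
  have : ∀ m k', FreeIn k' (iterApp (var 1) m (var 0)) → k' ≤ 1 := by
    intro m
    induction m with
    | zero => intro k' h; simp only [iterApp, FreeIn] at h; omega
    | succ m ih =>
        intro k' h
        rcases h with h | h
        · simp only [FreeIn] at h; omega
        · exact ih k' h
  have hk2 : FreeIn (k+1+1) (iterApp (var 1) n (var 0)) := hk
  have := this n (k+1+1) hk2
  omega

theorem closed_church (n : ℕ) : Closed (church n) :=
  closed_iff_fb.2 (fb_church n)

/-! ### closure of reductions under lift and subst -/

theorem Beta.subst_closed {t t' : Term} (h : Beta t t') (j : ℕ) (s : Term) :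
    Beta (subst j s t) (subst j s t') := by
  induction h generalizing j s with
  | @beta t u =>
      have := @Beta.beta (subst (j+1) (lift 0 s) t) (subst j s u)
      rw [← subst_subst t (Nat.zero_le j)] at this
      exact this
  | appL _ ih => exact Beta.appL (ih j s)
  | appR _ ih => exact Beta.appR (ih j s)
  | lam _ ih => exact Beta.lam (ih (j+1) (lift 0 s))

theorem Beta.lift_closed {t t' : Term} (h : Beta t t') (c : ℕ) :
    Beta (lift c t) (lift c t') := by
  induction h generalizing c with
  | @beta t u =>
      have := @Beta.beta (lift (c+1) t) (lift c u)
      rw [← lift_subst_le t (Nat.zero_le c)] at this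
      exact this
  | appL _ ih => exact Beta.appL (ih c)
  | appR _ ih => exact Beta.appR (ih c)
  | lam _ ih => exact Beta.lam (ih (c+1))

theorem HeadStep.subst_closed {t t' : Term} (h : HeadStep t t') (j : ℕ) (s : Term) :
    HeadStep (subst j s t) (subst j s t') := by
  induction h generalizing j s with
  | @beta t u =>
      have := @HeadStep.beta (subst (j+1) (lift 0 s) t) (subst j s u)
      rw [← subst_subst t (Nat.zero_le j)] at this
      exact this
  | @app t u w _ v ih => exact HeadStep.app (ih j s)
  | lam _ ih => exact HeadStep.lam (ih (j+1) (lift 0 s))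

theorem HeadStep.lift_closed {t t' : Term} (h : HeadStep t t') (c : ℕ) :
    HeadStep (lift c t) (lift c t') := by
  induction h generalizing c with
  | @beta t u =>
      have := @HeadStep.beta (lift (c+1) t) (lift c u)
      rw [← lift_subst_le t (Nat.zero_le c)] at this
      exact this
  | app _ ih => exact HeadStep.app (ih c)
  | lam _ ih => exact HeadStep.lam (ih (c+1))

theorem HeadRed.subst_closed {t t' : Term} (h : HeadRed t t') (j : ℕ) (s : Term) :
    HeadRed (subst j s t) (subst j s t') := by
  induction h with
  | refl => exact Relation.ReflTransGen.refl
  | tail _ h2 ih => exact ih.tail (h2.subst_closed j s)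

theorem HeadRed.lift_closed {t t' : Term} (h : HeadRed t t') (c : ℕ) :
    HeadRed (lift c t) (lift c t') := by
  induction h with
  | refl => exact Relation.ReflTransGen.refl
  | tail _ h2 ih => exact ih.tail (h2.lift_closed c)

theorem HeadRed.lam_congr {t t' : Term} (h : HeadRed t t') : HeadRed (lam t) (lam t') := by
  induction h with
  | refl => exact Relation.ReflTransGen.refl
  | tail _ h2 ih => exact ih.tail (HeadStep.lam h2)

end Term
end SO
namespace SO
namespace Term

/-! ### spines, weak head reduction -/

/-- `sp h cs` : `h` applied to the list `cs`. -/
def sp (h : Term) (cs : List Term) : Term := cs.foldl app h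

@[simp] theorem sp_nil (h : Term) : sp h [] = h := rfl
@[simp] theorem sp_cons (h : Term) (c : Term) (cs : List Term) :
    sp h (c :: cs) = sp (app h c) cs := rfl

/-- weak-head reduction step (head reduction at the root spine). -/
inductive W : Term → Term → Prop
  | beta : W (app (lam t) u) (subst 0 u t)
  | app : W t t' → W (app t u) (app t' u)

theorem W.isApp {t t' : Term} (h : W t t') : ∃ a b, t = Term.app a b := by
  cases h with
  | beta => exact ⟨_, _, rfl⟩
  | app _ => exact ⟨_, _, rfl⟩

theorem W.toHeadStep {t t' : Term} (h : W t t') : HeadStep t t' := by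
  induction h with
  | beta => exact HeadStep.beta
  | @app t u w hw ih =>
      obtain ⟨a, b, rfl⟩ := hw.isApp
      exact HeadStep.app ih

theorem W.subst_closed {t t' : Term} (h : W t t') (j : ℕ) (s : Term) :
    W (subst j s t) (subst j s t') := by
  induction h generalizing j s with
  | @beta t u =>
      have := @W.beta (subst (j+1) (lift 0 s) t) (subst j s u)
      rw [← subst_subst t (Nat.zero_le j)] at this
      exact this
  | app _ ih => exact W.app (ih j s)

/-- multi-step weak-head reduction -/
def Ws : Term → Term → Prop := Relation.ReflTransGen W

theorem Ws.toHeadRed {t t' : Term} (h : Ws t t') : HeadRed t t' := by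
  induction h with
  | refl => exact Relation.ReflTransGen.refl
  | tail _ h2 ih => exact ih.tail h2.toHeadStep

theorem Ws.subst_closed {t t' : Term} (h : Ws t t') (j : ℕ) (s : Term) :
    Ws (subst j s t) (subst j s t') := by
  induction h with
  | refl => exact Relation.ReflTransGen.refl
  | tail _ h2 ih => exact ih.tail (h2.subst_closed j s)

theorem Ws.app_congr {t t' : Term} (h : Ws t t') (u : Term) :
    Ws (app t u) (app t' u) := by
  induction h with
  | refl => exact Relation.ReflTransGen.refl
  | tail _ h2 ih => exact ih.tail (W.app h2)

theorem Ws.sp_congr {t t' : Term} (h : Ws t t') (cs : List Term) :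
    Ws (sp t cs) (sp t' cs) := by
  induction cs generalizing t t' with
  | nil => exact h
  | cons c cs ih => exact ih (h.app_congr c)

theorem Ws.head_sp {t t' : Term} (h : Ws t t') (cs : List Term) :
    HeadRed (sp t cs) (sp t' cs) := (h.sp_congr cs).toHeadRed

/-! ### determinism of head reduction -/

theorem HeadStep.det {t a b : Term} (h1 : HeadStep t a) (h2 : HeadStep t b) : a = b := by
  induction h1 generalizing b with
  | beta => cases h2 with
      | beta => rfl
  | @app t u w v _ ih =>
      cases h2 with
      | app h' => rw [ih h']
  | lam h ih =>
      cases h2 with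
      | lam h' => rw [ih h']

theorem HeadStep.lam_shape {t : Term} {z : Term} (h : HeadStep (Term.lam t) z) :
    ∃ t', z = Term.lam t' ∧ HeadStep t t' := by
  cases h with
  | lam h => exact ⟨_, rfl, h⟩

theorem HeadRed.lam_shape {s z : Term} (h : HeadRed s z) :
    ∀ {t : Term}, s = Term.lam t → ∃ t', z = Term.lam t' ∧ HeadRed t t' := by
  induction h using Relation.ReflTransGen.head_induction_on with
  | refl => intro t ht; exact ⟨t, ht, Relation.ReflTransGen.refl⟩
  | head h1 _ ih =>
      intro t ht
      subst ht
      obtain ⟨t₁, rfl, h1'⟩ := h1.lam_shape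
      obtain ⟨t', rfl, hred⟩ := ih rfl
      exact ⟨t', rfl, Relation.ReflTransGen.head h1' hred⟩

/-- head normal forms absorb: if `t ≻ z` with `z` head normal and `t ≻ y`,
then `y ≻ z`. -/
theorem HeadRed.hnf_absorb {t z y : Term} (hzn : IsHNF z) (hy : HeadRed t y) :
    HeadRed t z → HeadRed y z := by
  induction hy using Relation.ReflTransGen.head_induction_on with
  | refl => exact id
  | head h1 _ ih =>
      intro hz
      cases hz.cases_head with
      | inl h => exact absurd (h ▸ h1) (hzn _)
      | inr h =>
          obtain ⟨u, hu, hured⟩ := h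
          exact ih ((HeadStep.det h1 hu) ▸ hured)

end Term
end SO
namespace SO
namespace Term

/-! ### parallel reduction and confluence -/

inductive Par : Term → Term → Prop
  | var : Par (var i) (var i)
  | lam : Par t t' → Par (lam t) (lam t')
  | app : Par t t' → Par u u' → Par (app t u) (app t' u')
  | beta : Par t t' → Par u u' → Par (app (lam t) u) (subst 0 u' t')

theorem par_refl : ∀ t : Term, Par t t := by
  intro t
  induction t with
  | var i => exact Par.var
  | lam t ih => exact Par.lam ih
  | app t u iht ihu => exact Par.app iht ihu

theorem Beta.toPar {t t' : Term} (h : Beta t t') : Par t t' := by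
  induction h with
  | beta => exact Par.beta (par_refl _) (par_refl _)
  | appL _ ih => exact Par.app ih (par_refl _)
  | appR _ ih => exact Par.app (par_refl _) ih
  | lam _ ih => exact Par.lam ih

/-- multi-step β-reduction -/
def BetaS : Term → Term → Prop := Relation.ReflTransGen Beta

theorem BetaS.lam_congr {t t' : Term} (h : BetaS t t') : BetaS (lam t) (lam t') := by
  induction h with
  | refl => exact .refl
  | tail _ h2 ih => exact ih.tail (Beta.lam h2)

theorem BetaS.app_congr {t t' u u' : Term} (h1 : BetaS t t') (h2 : BetaS u u') :
    BetaS (app t u) (app t' u') := by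
  apply Relation.ReflTransGen.trans (b := app t' u)
  · induction h1 with
    | refl => exact .refl
    | tail _ hs ih => exact ih.tail (Beta.appL hs)
  · induction h2 with
    | refl => exact .refl
    | tail _ hs ih => exact ih.tail (Beta.appR hs)

theorem Par.toBetaS {t t' : Term} (h : Par t t') : BetaS t t' := by
  induction h with
  | var => exact .refl
  | lam _ ih => exact ih.lam_congr
  | app _ _ ih1 ih2 => exact ih1.app_congr ih2
  | @beta t t' u u' _ _ ih1 ih2 =>
      exact Relation.ReflTransGen.tail
        ((ih1.lam_congr).app_congr ih2) Beta.beta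

theorem Par.lift_closed {t t' : Term} (h : Par t t') (c : ℕ) :
    Par (lift c t) (lift c t') := by
  induction h generalizing c with
  | var => simp only [lift]; split_ifs <;> exact Par.var
  | lam _ ih => exact Par.lam (ih (c+1))
  | app _ _ ih1 ih2 => exact Par.app (ih1 c) (ih2 c)
  | @beta t t' u u' _ _ ih1 ih2 =>
      have := Par.beta (ih1 (c+1)) (ih2 c)
      rw [← lift_subst_le t' (Nat.zero_le c)] at this
      exact this

theorem Par.subst_closed {t t' : Term} (h : Par t t') :
    ∀ {j : ℕ} {s s' : Term}, Par s s' → Par (subst j s t) (subst j s' t') := by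
  induction h with
  | @var i =>
      intro j s s' hs
      simp only [subst]
      split_ifs
      · exact hs
      · exact par_refl _
      · exact par_refl _
  | lam _ ih => intro j s s' hs; exact Par.lam (ih (hs.lift_closed 0))
  | app _ _ ih1 ih2 => intro j s s' hs; exact Par.app (ih1 hs) (ih2 hs)
  | @beta t t' u u' _ _ ih1 ih2 =>
      intro j s s' hs
      have := Par.beta (ih1 (j := j+1) (hs.lift_closed 0)) (ih2 (j := j) hs)
      rw [← subst_subst t' (Nat.zero_le j)] at this
      exact this

theorem par_var_inv {i : ℕ} {y : Term} (h : Par (var i) y) : y = var i := by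
  cases h; rfl

theorem par_lam_inv {t y : Term} (h : Par (Term.lam t) y) :
    ∃ t', y = Term.lam t' ∧ Par t t' := by
  cases h with
  | lam h => exact ⟨_, rfl, h⟩

/-- Takahashi's complete development -/
def cd : Term → Term
  | var i => var i
  | lam t => lam (cd t)
  | app (lam t) u => subst 0 (cd u) (cd t)
  | app (var i) u => app (var i) (cd u)
  | app (app t v) u => app (cd (app t v)) (cd u)

theorem par_cd {t s : Term} (h : Par t s) : Par s (cd t) := by
  induction h with
  | var => exact Par.var
  | lam _ ih => exact Par.lam ih
  | @app a a' b b' h1 h2 ih1 ih2 =>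
      cases a with
      | var i =>
          rw [par_var_inv h1] at *
          exact Par.app ih1 ih2
      | lam p =>
          obtain ⟨p'', rfl, hp⟩ := par_lam_inv h1
          obtain ⟨q, hq, hpq⟩ := par_lam_inv ih1
          cases hq
          exact Par.beta hpq ih2
      | app p q =>
          exact Par.app ih1 ih2
  | @beta p p' q q' _ _ ih1 ih2 =>
      exact Par.subst_closed ih1 ih2

theorem par_diamond {t a b : Term} (h1 : Par t a) (h2 : Par t b) :
    ∃ c, Par a c ∧ Par b c := ⟨cd t, par_cd h1, par_cd h2⟩

/-- multi-step parallel reduction -/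
def ParS : Term → Term → Prop := Relation.ReflTransGen Par

theorem par_strip {t a b : Term} (h1 : Par t a) (h2 : ParS t b) :
    ∃ c, ParS a c ∧ Par b c := by
  induction h2 generalizing a with
  | refl => exact ⟨a, .refl, h1⟩
  | @tail m n _ hmn ih =>
      obtain ⟨c, hac, hmc⟩ := ih h1
      obtain ⟨d, hcd, hnd⟩ := par_diamond hmc hmn
      exact ⟨d, hac.tail hcd, hnd⟩

theorem parS_confluent {t a b : Term} (h1 : ParS t a) (h2 : ParS t b) :
    ∃ c, ParS a c ∧ ParS b c := by
  induction h1 generalizing b with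
  | refl => exact ⟨b, h2, .refl⟩
  | @tail m n _ hmn ih =>
      obtain ⟨c, hmc, hbc⟩ := ih h2
      obtain ⟨d, hnd, hcd⟩ := par_strip hmn hmc
      exact ⟨d, hnd, hbc.tail hcd⟩

theorem parS_iff_betaS {t s : Term} : ParS t s ↔ BetaS t s := by
  constructor
  · intro h
    induction h with
    | refl => exact .refl
    | tail _ h2 ih => exact ih.trans h2.toBetaS
  · intro h
    induction h with
    | refl => exact .refl
    | tail _ h2 ih => exact ih.tail h2.toPar

theorem betaS_confluent {t a b : Term} (h1 : BetaS t a) (h2 : BetaS t b) :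
    ∃ c, BetaS a c ∧ BetaS b c := by
  obtain ⟨c, hc1, hc2⟩ := parS_confluent (parS_iff_betaS.2 h1) (parS_iff_betaS.2 h2)
  exact ⟨c, parS_iff_betaS.1 hc1, parS_iff_betaS.1 hc2⟩

theorem BetaS.toBetaEq {t s : Term} (h : BetaS t s) : BetaEq t s := by
  induction h with
  | refl => exact Relation.EqvGen.refl _
  | tail _ h2 ih => exact Relation.EqvGen.trans _ _ _ ih (Relation.EqvGen.rel _ _ h2)

theorem BetaEq.join {t s : Term} (h : BetaEq t s) : ∃ c, BetaS t c ∧ BetaS s c := by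
  induction h with
  | rel a b hab => exact ⟨b, Relation.ReflTransGen.single hab, .refl⟩
  | refl a => exact ⟨a, .refl, .refl⟩
  | symm a b _ ih => obtain ⟨c, h1, h2⟩ := ih; exact ⟨c, h2, h1⟩
  | trans a b c _ _ ih1 ih2 =>
      obtain ⟨d, had, hbd⟩ := ih1
      obtain ⟨e, hbe, hce⟩ := ih2
      obtain ⟨f, hdf, hef⟩ := betaS_confluent hbd hbe
      exact ⟨f, had.trans hdf, hce.trans hef⟩

/-! ### Church numerals are β-normal -/

theorem no_beta_iterApp (n : ℕ) : ∀ z, ¬ Beta (iterApp (var 1) n (var 0)) z := by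
  induction n with
  | zero => intro z h; cases h
  | succ n ih =>
      intro z h
      cases h with
      | appL h => cases h
      | appR h => exact ih _ h
  
theorem betaS_church_eq {n : ℕ} {z : Term} (h : BetaS (church n) z) : z = church n := by
  induction h with
  | refl => rfl
  | tail hsteps h2 ih =>
      subst ih
      cases h2 with
      | lam h => cases h with
          | lam h => exact absurd h (no_beta_iterApp n _)

theorem betaEq_church {θ : Term} {n : ℕ} (h : BetaEq θ (church n)) :
    BetaS θ (church n) := by
  obtain ⟨c, h1, h2⟩ := h.join
  rwa [betaS_church_eq h2] at h1

end Term
end SO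
namespace SO
namespace Term

/-! ### Kashima-style standardization -/

theorem W.lift_closed {t t' : Term} (h : W t t') (c : ℕ) :
    W (lift c t) (lift c t') := by
  induction h generalizing c with
  | @beta t u =>
      have := @W.beta (lift (c+1) t) (lift c u)
      rw [← lift_subst_le t (Nat.zero_le c)] at this
      exact this
  | app _ ih => exact W.app (ih c)

theorem Ws.lift_closed {t t' : Term} (h : Ws t t') (c : ℕ) :
    Ws (lift c t) (lift c t') := by
  induction h with
  | refl => exact .refl
  | tail _ h2 ih => exact ih.tail (h2.lift_closed c)

/-- Kashima's standard-reduction relation (specialized to extract head reductions). -/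
inductive St : Term → Term → Prop
  | var : Ws m (var i) → St m (var i)
  | lam : Ws m (Term.lam p) → St p p' → St m (Term.lam p')
  | app : Ws m (Term.app p q) → St p p' → St q q' → St m (Term.app p' q')

theorem st_refl : ∀ m : Term, St m m := by
  intro m
  induction m with
  | var i => exact St.var .refl
  | lam t ih => exact St.lam .refl ih
  | app t u iht ihu => exact St.app .refl iht ihu

theorem st_w {m n l : Term} (h : Ws m n) (h2 : St n l) : St m l := by
  cases h2 with
  | var h' => exact St.var (h.trans h')
  | lam h' hp => exact St.lam (h.trans h') hp
  | app h' hp hq => exact St.app (h.trans h') hp hq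

theorem st_lift {m n : Term} (h : St m n) : ∀ c, St (lift c m) (lift c n) := by
  induction h with
  | @var m i hw =>
      intro c
      have := hw.lift_closed c
      simp only [lift] at *
      split_ifs at * <;> exact St.var this
  | @lam m p p' hw _ ih =>
      intro c
      have := hw.lift_closed c
      simp only [lift] at *
      exact St.lam this (ih (c+1))
  | @app m p q p' q' hw _ _ ihp ihq =>
      intro c
      have := hw.lift_closed c
      simp only [lift] at *
      exact St.app this (ihp c) (ihq c)

theorem st_subst {m m' : Term} (h : St m m') :
    ∀ {j : ℕ} {s s' : Term}, St s s' → St (subst j s m) (subst j s' m') := by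
  induction h with
  | @var m i hw =>
      intro j s s' hs
      have hws := hw.subst_closed j s
      simp only [subst] at *
      split_ifs at *
      · exact st_w hws hs
      · exact St.var hws
      · exact St.var hws
  | @lam m p p' hw _ ih =>
      intro j s s' hs
      have hws := hw.subst_closed j s
      simp only [subst] at *
      exact St.lam hws (ih (st_lift hs 0))
  | @app m p q p' q' hw _ _ ihp ihq =>
      intro j s s' hs
      have hws := hw.subst_closed j s
      simp only [subst] at *
      exact St.app hws (ihp hs) (ihq hs)

theorem st_inv_lam {m p' : Term} (h : St m (Term.lam p')) :
    ∃ p, Ws m (Term.lam p) ∧ St p p' := by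
  cases h with
  | lam h' hp => exact ⟨_, h', hp⟩

theorem st_inv_app {m p' q' : Term} (h : St m (Term.app p' q')) :
    ∃ p q, Ws m (Term.app p q) ∧ St p p' ∧ St q q' := by
  cases h with
  | app h' hp hq => exact ⟨_, _, h', hp, hq⟩

theorem st_inv_var {m : Term} {i : ℕ} (h : St m (var i)) : Ws m (var i) := by
  cases h with
  | var h' => exact h'

theorem st_beta {m n : Term} (h : St m n) : ∀ {n' : Term}, Beta n n' → St m n' := by
  induction h with
  | var hw => intro n' hb; cases hb
  | @lam m p p' hw _ ih =>
      intro n' hb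
      cases hb with
      | lam hb' => exact St.lam hw (ih hb')
  | @app m p q p' q' hw hp hq ihp ihq =>
      intro n' hb
      cases hb with
      | appL hb' => exact St.app hw (ihp hb') hq
      | appR hb' => exact St.app hw hp (ihq hb')
      | @beta r' u =>
          obtain ⟨r₀, hwr, hr⟩ := st_inv_lam hp
          have hws : Ws m (subst 0 q r₀) :=
            (hw.trans ((hwr.app_congr q).tail W.beta))
          exact st_w hws (st_subst hr hq)

theorem std_main {m n : Term} (h : BetaS m n) : St m n := by
  induction h with
  | refl => exact st_refl m
  | tail _ h2 ih => exact st_beta ih h2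

end Term
end SO
namespace SO
namespace Term

/-! ### lifting towers -/

def liftn : ℕ → Term → Term
  | 0, t => t
  | d+1, t => lift 0 (liftn d t)

def liftn2 : ℕ → Term → Term
  | 0, t => t
  | d+1, t => lift 2 (liftn2 d t)

theorem lift_liftn {c d : ℕ} (h : c ≤ d) (t : Term) :
    lift c (liftn d t) = liftn (d+1) t := by
  induction d generalizing c with
  | zero =>
      have : c = 0 := by omega
      subst this
      rfl
  | succ d ih =>
      cases c with
      | zero => rfl
      | succ c =>
          show lift (c+1) (lift 0 (liftn d t)) = lift 0 (liftn (d+1) t)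
          rw [lift_lift _ (Nat.zero_le c), ih (by omega)]

theorem subst_liftn {d : ℕ} (s t : Term) :
    subst d s (liftn (d+1) t) = liftn d t := by
  rw [← lift_liftn (Nat.le_refl d), subst_lift]

theorem lift_liftn2 {c d : ℕ} (h : c ≤ d) (t : Term) :
    lift (c+2) (liftn2 d t) = liftn2 (d+1) t := by
  induction d generalizing c with
  | zero =>
      have : c = 0 := by omega
      subst this
      rfl
  | succ d ih =>
      cases c with
      | zero => rfl
      | succ c =>
          show lift (c+2+1) (lift 2 (liftn2 d t)) = lift 2 (liftn2 (d+1) t)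
          rw [lift_lift _ (by omega : 2 ≤ c + 2), ih (by omega)]

theorem subst_liftn2 {d : ℕ} (s t : Term) :
    subst (d+2) s (liftn2 (d+1) t) = liftn2 d t := by
  rw [← lift_liftn2 (Nat.le_refl d), subst_lift]

/-! ### double substitution -/

/-- `sub2 A B w = w[1 := A, 0 := B]` -/
def sub2 (A B w : Term) : Term := subst 0 B (subst 1 (lift 0 A) w)

theorem sub2_lift (A B w : Term) (c : ℕ) :
    lift c (sub2 A B w) = sub2 (lift c A) (lift c B) (lift (c+2) w) := by
  unfold sub2
  rw [lift_subst_le _ (Nat.zero_le c), lift_subst_le _ (by omega : 1 ≤ c + 1),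
    lift_lift A (Nat.zero_le c)]

theorem sub2_subst (A B w : Term) (j : ℕ) (s : Term) :
    subst j s (sub2 A B w) =
      sub2 (subst j s A) (subst j s B) (subst (j+2) (lift 0 (lift 0 s)) w) := by
  unfold sub2
  rw [subst_subst _ (Nat.zero_le j), subst_subst _ (by omega : 1 ≤ j + 1),
    ← lift_subst_ge A (Nat.zero_le j), lift_lift s (Nat.le_refl 0)]

@[simp] theorem sub2_var1 (A B : Term) : sub2 A B (var 1) = A := by
  show subst 0 B (subst 1 (lift 0 A) (var 1)) = A
  rw [show subst 1 (lift 0 A) (var 1) = lift 0 A from by simp [subst], subst_lift]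

@[simp] theorem sub2_var0 (A B : Term) : sub2 A B (var 0) = B := by
  show subst 0 B (subst 1 (lift 0 A) (var 0)) = B
  rw [show subst 1 (lift 0 A) (var 0) = var 0 from by simp [subst]]
  simp [subst]

@[simp] theorem sub2_app (A B w1 w2 : Term) :
    sub2 A B (app w1 w2) = app (sub2 A B w1) (sub2 A B w2) := rfl

end Term

namespace XT

@[simp] theorem spine_nil (h : XT) : spine h [] = h := rfl
@[simp] theorem spine_cons (h c : XT) (cs : List XT) :
    spine h (c :: cs) = spine (app h c) cs := rfl

theorem HeadStep.lam_shape {t z : XT} (h : HeadStep (XT.lam t) z) :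
    ∃ t', z = XT.lam t' ∧ HeadStep t t' := by
  cases h with
  | lam h => exact ⟨_, rfl, h⟩

theorem HeadRed.lam_shape {s z : XT} (h : HeadRed s z) :
    ∀ {t : XT}, s = XT.lam t → ∃ t', z = XT.lam t' := by
  induction h using Relation.ReflTransGen.head_induction_on with
  | refl => intro t ht; exact ⟨t, ht⟩
  | head h1 _ ih =>
      intro t ht
      subst ht
      obtain ⟨t₁, rfl, _⟩ := h1.lam_shape
      exact ih rfl

/-- the tower `(lift 0)^d` on `XT` -/
def liftn : ℕ → XT → XT
  | 0, t => t
  | d+1, t => lift 0 (liftn d t)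

end XT

open Term

/-! ### parametric translation of λx-terms into λ-terms -/

/-- translation: `const m ↦ F m` (at depth `d`, appropriately lifted), and
`cconst l a b cs ↦ G d l ⟦a⟧ ⟦b⟧`. -/
def trG (F : ℕ → Term) (G : ℕ → ℕ → Term → Term → Term) : ℕ → XT → Term
  | d, .var i => .var i
  | d, .const m => liftn d (F m)
  | d, .lam t => .lam (trG F G (d+1) t)
  | d, .app t u => .app (trG F G d t) (trG F G d u)
  | d, .cconst l a b _cs => G d l (trG F G d a) (trG F G d b)

theorem XT.rec' {motive : XT → Prop}
    (hvar : ∀ i, motive (.var i))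
    (hconst : ∀ n, motive (.const n))
    (hlam : ∀ t, motive t → motive (.lam t))
    (happ : ∀ t u, motive t → motive u → motive (.app t u))
    (hcc : ∀ l a b cs, motive a → motive b → motive (.cconst l a b cs)) :
    ∀ t, motive t := by
  have key : ∀ (n : ℕ) (t : XT), sizeOf t ≤ n → motive t := by
    intro n
    induction n with
    | zero => intro t h; cases t <;> simp at h <;> omega
    | succ n ih =>
        intro t h
        cases t with
        | var i => exact hvar i
        | const m => exact hconst m
        | lam t => exact hlam t (ih t (by simp at h; omega))
        | app t u => exact happ t u (ih t (by simp at h; omega)) (ih u (by simp at h; omega))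
        | cconst l a b cs =>
            exact hcc l a b cs (ih a (by simp at h; omega)) (ih b (by simp at h; omega))
  intro t
  exact key (sizeOf t) t (Nat.le_refl _)

namespace trG

variable {F : ℕ → Term} {G : ℕ → ℕ → Term → Term → Term}

/-- commutation of the translation with lifting -/
theorem liftcomm
    (hGl : ∀ d l A B c, c ≤ d →
      G (d+1) l (Term.lift c A) (Term.lift c B) = Term.lift c (G d l A B)) :
    ∀ (t : XT) (d c : ℕ), c ≤ d →
      trG F G (d+1) (XT.lift c t) = Term.lift c (trG F G d t) := by
  intro t
  induction t using XT.rec' with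
  | hvar i =>
      intro d c h
      simp only [XT.lift]
      split_ifs <;> simp only [trG, Term.lift] <;> split_ifs <;>
        first | rfl | (exfalso; omega) | (congr 1; omega)
  | hconst m => intro d c h; simp only [XT.lift, trG, lift_liftn h]
  | hlam t ih =>
      intro d c h
      simp only [XT.lift, trG, Term.lift, ih (d+1) (c+1) (by omega)]
  | happ t u iht ihu =>
      intro d c h
      simp only [XT.lift, trG, Term.lift, iht d c h, ihu d c h]
  | hcc l a b cs iha ihb =>
      intro d c h
      simp only [XT.lift, trG, iha d c h, ihb d c h, hGl d l _ _ c h]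

theorem tower
    (hGl : ∀ d l A B c, c ≤ d →
      G (d+1) l (Term.lift c A) (Term.lift c B) = Term.lift c (G d l A B))
    (t : XT) (d : ℕ) :
    trG F G d (XT.liftn d t) = liftn d (trG F G 0 t) := by
  induction d with
  | zero => rfl
  | succ d ih =>
      show trG F G (d+1) (XT.lift 0 (XT.liftn d t)) = Term.lift 0 (liftn d (trG F G 0 t))
      rw [liftcomm hGl _ d 0 (Nat.zero_le d), ih]

theorem substcomm
    (hGl : ∀ d l A B c, c ≤ d →
      G (d+1) l (Term.lift c A) (Term.lift c B) = Term.lift c (G d l A B))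
    (hGs : ∀ d l A B (s : Term), Term.subst d (liftn d s) (G (d+1) l A B) =
      G d l (Term.subst d (liftn d s) A) (Term.subst d (liftn d s) B)) :
    ∀ (t : XT) (d : ℕ) (s : XT),
      trG F G d (XT.subst d (XT.liftn d s) t) =
        Term.subst d (liftn d (trG F G 0 s)) (trG F G (d+1) t) := by
  intro t
  induction t using XT.rec' with
  | hvar i =>
      intro d s
      simp only [XT.subst, trG, Term.subst]
      split_ifs
      · exact tower hGl s d
      · simp [trG]
      · simp [trG]
  | hconst m =>
      intro d s
      simp only [XT.subst, trG, subst_liftn]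
  | hlam t ih =>
      intro d s
      simp only [XT.subst, trG, Term.subst]
      have := ih (d+1) s
      simp only [XT.liftn, liftn] at this ⊢
      rw [this]
  | happ t u iht ihu =>
      intro d s
      simp only [XT.subst, trG, Term.subst, iht d s, ihu d s]
  | hcc l a b cs iha ihb =>
      intro d s
      simp only [XT.subst, trG, iha d s, ihb d s, hGs d l]

theorem toXT_id : ∀ (t : Term) (d : ℕ), trG F G d t.toXT = t := by
  intro t
  induction t with
  | var i => intro d; rfl
  | lam t ih => intro d; simp only [Term.toXT, trG, ih]
  | app t u iht ihu => intro d; simp only [Term.toXT, trG, iht, ihu]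

theorem spine_comm (cs : List XT) : ∀ (h : XT) (d : ℕ),
    trG F G d (XT.spine h cs) = Term.sp (trG F G d h) (cs.map (trG F G d)) := by
  induction cs with
  | nil => intro h d; rfl
  | cons c cs ih => intro h d; simp only [XT.spine_cons, List.map, Term.sp_cons, ih, trG]

theorem headstep
    (hGl : ∀ d l A B c, c ≤ d →
      G (d+1) l (Term.lift c A) (Term.lift c B) = Term.lift c (G d l A B))
    (hGs : ∀ d l A B (s : Term), Term.subst d (liftn d s) (G (d+1) l A B) =
      G d l (Term.subst d (liftn d s) A) (Term.subst d (liftn d s) B))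
    {M M' : XT} (h : XT.HeadStep M M') (hM : ∀ t, M ≠ XT.lam t) :
    Term.W (trG F G 0 M) (trG F G 0 M') := by
  induction h with
  | @beta t u =>
      have h0 := substcomm (F := F) hGl hGs t 0 u
      show Term.W (Term.app (Term.lam (trG F G 1 t)) (trG F G 0 u)) (trG F G 0 (XT.subst 0 u t))
      rw [show XT.subst 0 u t = XT.subst 0 (XT.liftn 0 u) t from rfl, h0]
      exact Term.W.beta
  | @app t u w _ v ih =>
      exact Term.W.app (ih (by intro x hx; cases hx))
  | lam _ _ => exact absurd rfl (hM _)

theorem headred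
    (hGl : ∀ d l A B c, c ≤ d →
      G (d+1) l (Term.lift c A) (Term.lift c B) = Term.lift c (G d l A B))
    (hGs : ∀ d l A B (s : Term), Term.subst d (liftn d s) (G (d+1) l A B) =
      G d l (Term.subst d (liftn d s) A) (Term.subst d (liftn d s) B))
    {M Z : XT} (h : XT.HeadRed M Z) (hZ : ∀ t, Z ≠ XT.lam t) :
    Term.Ws (trG F G 0 M) (trG F G 0 Z) := by
  induction h using Relation.ReflTransGen.head_induction_on with
  | refl => exact .refl
  | @head M M₁ h1 h2 ih =>
      have hM : ∀ t, M ≠ XT.lam t := by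
        intro t ht
        subst ht
        obtain ⟨t', rfl⟩ := XT.HeadRed.lam_shape (Relation.ReflTransGen.head h1 h2) rfl
        exact hZ t' rfl
      exact Relation.ReflTransGen.head (headstep hGl hGs h1 hM) ih

end trG

end SO
namespace SO
namespace Term

/-! ### recursive numerals -/

/-- recursive Church numerals: `rn 0 = λλ0`, `rn (m+1) = λλ (1)((rn m) 1 0)` -/
def rn : ℕ → Term
  | 0 => lam (lam (var 0))
  | m+1 => lam (lam (app (var 1) (app (app (rn m) (var 1)) (var 0))))

/-- a variant of `rn` -/
def rn' : ℕ → Term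
  | 0 => lam (lam (app (lam (var 0)) (var 0)))
  | m+1 => lam (lam (app (var 1) (app (app (rn' m) (var 1)) (var 0))))

theorem rn_ne_rn' : ∀ m, rn m ≠ rn' m := by
  intro m
  induction m with
  | zero => simp [rn, rn']
  | succ m ih => intro h; apply ih; simpa [rn, rn'] using h

theorem fb_rn : ∀ m, FB 0 (rn m) := by
  intro m
  induction m with
  | zero =>
      intro k hk
      exfalso
      have : FreeIn (k+2) (var 0) := hk
      simp [FreeIn] at this
  | succ m ih =>
      intro k hk
      exfalso
      have : FreeIn (k+2) (app (var 1) (app (app (rn m) (var 1)) (var 0))) := hk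
      rcases this with h | (h | h) | h
      · simp [FreeIn] at h
      · exact absurd (ih _ h) (by omega)
      · simp [FreeIn] at h
      · simp [FreeIn] at h

theorem fb_rn' : ∀ m, FB 0 (rn' m) := by
  intro m
  induction m with
  | zero =>
      intro k hk
      exfalso
      have : FreeIn (k+2) (app (lam (var 0)) (var 0)) := hk
      rcases this with h | h <;> simp [FreeIn] at h
  | succ m ih =>
      intro k hk
      exfalso
      have : FreeIn (k+2) (app (var 1) (app (app (rn' m) (var 1)) (var 0))) := hk
      rcases this with h | (h | h) | h
      · simp [FreeIn] at h
      · exact absurd (ih _ h) (by omega)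
      · simp [FreeIn] at h
      · simp [FreeIn] at h

theorem closed_rn (m : ℕ) : Closed (rn m) := closed_iff_fb.2 (fb_rn m)
theorem closed_rn' (m : ℕ) : Closed (rn' m) := closed_iff_fb.2 (fb_rn' m)

theorem subst_iterApp (j : ℕ) (s u v : Term) (n : ℕ) :
    subst j s (iterApp u n v) = iterApp (subst j s u) n (subst j s v) := by
  induction n with
  | zero => rfl
  | succ n ih => simp only [iterApp, subst, ih]

/-- `(church n) 1 0 ↠β iterApp 1 n 0` (inside two fresh binders) -/
theorem church_app_red (n : ℕ) :
    BetaS (app (app (church n) (var 1)) (var 0)) (iterApp (var 1) n (var 0)) := by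
  have s1 : Beta (app (church n) (var 1))
      (lam (iterApp (var 2) n (var 0))) := by
    have := @Beta.beta (lam (iterApp (var 1) n (var 0))) (var 1)
    have e : subst 0 (var 1) (lam (iterApp (var 1) n (var 0)))
        = lam (iterApp (var 2) n (var 0)) := by
      simp only [subst, subst_iterApp]
      norm_num [lift, subst]
    rw [e] at this
    exact this
  have s2 : Beta (app (lam (iterApp (var 2) n (var 0))) (var 0))
      (iterApp (var 1) n (var 0)) := by
    have := @Beta.beta (iterApp (var 2) n (var 0)) (var 0)
    have e : subst 0 (var 0) (iterApp (var 2) n (var 0))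
        = iterApp (var 1) n (var 0) := by
      simp only [subst_iterApp]
      norm_num [subst]
    rw [e] at this
    exact this
  exact Relation.ReflTransGen.tail
    (Relation.ReflTransGen.single (Beta.appL s1)) s2

theorem rn_betaS_church : ∀ n, BetaS (rn n) (church n) := by
  intro n
  induction n with
  | zero => exact .refl
  | succ n ih =>
      show BetaS (lam (lam (app (var 1) (app (app (rn n) (var 1)) (var 0)))))
        (lam (lam (app (var 1) (iterApp (var 1) n (var 0)))))
      refine BetaS.lam_congr (BetaS.lam_congr (BetaS.app_congr .refl ?_))
      exact Relation.ReflTransGen.trans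
        ((ih.app_congr (.refl)).app_congr (.refl)) (church_app_red n)

theorem rn'_betaS_church : ∀ n, BetaS (rn' n) (church n) := by
  intro n
  induction n with
  | zero =>
      refine Relation.ReflTransGen.single ?_
      show Beta (lam (lam (app (lam (var 0)) (var 0)))) (lam (lam (var 0)))
      refine Beta.lam (Beta.lam ?_)
      have := @Beta.beta (var 0) (var 0)
      simpa [subst] using this
  | succ n ih =>
      show BetaS (lam (lam (app (var 1) (app (app (rn' n) (var 1)) (var 0)))))
        (lam (lam (app (var 1) (iterApp (var 1) n (var 0)))))
      refine BetaS.lam_congr (BetaS.lam_congr (BetaS.app_congr .refl ?_))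
      exact Relation.ReflTransGen.trans
        ((ih.app_congr (.refl)).app_congr (.refl)) (church_app_red n)

/-! ### weak-head computations with the recursive numerals -/

theorem W.sp_closed {t u : Term} (h : W t u) : ∀ cs, W (sp t cs) (sp u cs) := by
  intro cs
  induction cs generalizing t u with
  | nil => exact h
  | cons c cs ih => exact ih (W.app h)

/-- first reduction step of `(R)A B d̄` where `R = λλ body` -/
theorem red_twolam {R body A B : Term} (hR : R = lam (lam body)) (cs : List Term) :
    W (sp (app (app R A) B) cs)
      (sp (app (lam (subst 1 (lift 0 A) body)) B) cs) := by
  subst hR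
  refine W.sp_closed (W.app ?_) cs
  have := @W.beta (lam body) A
  simpa [subst] using this

theorem red_twolam' {body B : Term} (cs : List Term) :
    W (sp (app (lam body) B) cs) (sp (subst 0 B body) cs) :=
  W.sp_closed W.beta cs

theorem rn0_red (A B : Term) (cs : List Term) :
    ∃ X, HeadStep (sp (app (app (rn 0) A) B) cs) X ∧
      HeadRed X (sp B cs) := by
  refine ⟨sp (app (lam (var 0)) B) cs, ?_, ?_⟩
  · have := red_twolam (rfl : rn 0 = lam (lam (var 0))) (A := A) (B := B) cs
    simpa [subst] using this.toHeadStep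
  · have := (red_twolam' (body := var 0) (B := B) cs).toHeadStep
    simp only [subst] at this
    norm_num at this
    exact Relation.ReflTransGen.single this

theorem rnS_red (m : ℕ) (A B : Term) (cs : List Term) :
    ∃ X, HeadStep (sp (app (app (rn (m+1)) A) B) cs) X ∧
      HeadRed X (sp (app A (app (app (rn m) A) B)) cs) := by
  have e1 : subst 1 (lift 0 A) (app (var 1) (app (app (rn m) (var 1)) (var 0)))
      = app (lift 0 A) (app (app (rn m) (lift 0 A)) (var 0)) := by
    simp only [subst, subst_of_closed (closed_rn m)]
    norm_num
  have e2 : subst 0 B (app (lift 0 A) (app (app (rn m) (lift 0 A)) (var 0)))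
      = app A (app (app (rn m) A) B) := by
    simp only [subst, subst_lift, subst_of_closed (closed_rn m)]
    norm_num
  refine ⟨_, (red_twolam (rfl : rn (m+1) = lam (lam _)) cs).toHeadStep, ?_⟩
  rw [e1]
  have := (red_twolam' (body := app (lift 0 A) (app (app (rn m) (lift 0 A)) (var 0)))
    (B := B) cs).toHeadStep
  rw [e2] at this
  exact Relation.ReflTransGen.single this

theorem rn'0_red (A B : Term) (cs : List Term) :
    ∃ X, HeadStep (sp (app (app (rn' 0) A) B) cs) X ∧
      HeadRed X (sp B cs) := by
  refine ⟨sp (app (lam (app (lam (var 0)) (var 0))) B) cs, ?_, ?_⟩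
  · have := red_twolam (rfl : rn' 0 = lam (lam (app (lam (var 0)) (var 0)))) (A := A) (B := B) cs
    simpa [subst, lift] using this.toHeadStep
  · have h2 := (red_twolam' (body := app (lam (var 0)) (var 0)) (B := B) cs).toHeadStep
    have e : subst 0 B (app (lam (var 0)) (var 0)) = app (lam (var 0)) B := by
      simp [subst, lift]
    rw [e] at h2
    have h3 := (red_twolam' (body := var 0) (B := B) cs).toHeadStep
    have e3 : subst 0 B (var 0) = B := by simp [subst]
    rw [e3] at h3
    exact Relation.ReflTransGen.head h2 (Relation.ReflTransGen.single h3)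

theorem rn'S_red (m : ℕ) (A B : Term) (cs : List Term) :
    ∃ X, HeadStep (sp (app (app (rn' (m+1)) A) B) cs) X ∧
      HeadRed X (sp (app A (app (app (rn' m) A) B)) cs) := by
  have e1 : subst 1 (lift 0 A) (app (var 1) (app (app (rn' m) (var 1)) (var 0)))
      = app (lift 0 A) (app (app (rn' m) (lift 0 A)) (var 0)) := by
    simp only [subst, subst_of_closed (closed_rn' m)]
    norm_num
  have e2 : subst 0 B (app (lift 0 A) (app (app (rn' m) (lift 0 A)) (var 0)))
      = app A (app (app (rn' m) A) B) := by
    simp only [subst, subst_lift, subst_of_closed (closed_rn' m)]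
    norm_num
  refine ⟨_, (red_twolam (rfl : rn' (m+1) = lam (lam _)) cs).toHeadStep, ?_⟩
  rw [e1]
  have := (red_twolam' (body := app (lift 0 A) (app (app (rn' m) (lift 0 A)) (var 0)))
    (B := B) cs).toHeadStep
  rw [e2] at this
  exact Relation.ReflTransGen.single this

end Term
end SO
namespace SO
open Term

/-! ### well-formed λx-terms -/

inductive WFX (n : ℕ) : XT → Prop
  | var : WFX n (.var i)
  | const : WFX n (.const n)
  | lam : WFX n t → WFX n (.lam t)
  | app : WFX n t → WFX n u → WFX n (.app t u)
  | cconst {l a b cs} : l < n → WFX n a → WFX n b → (∀ c ∈ cs, WFX n c) →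
      WFX n (.cconst l a b cs)

theorem XT.liftList_eq_map (c : ℕ) (cs : List XT) :
    XT.liftList c cs = cs.map (XT.lift c) := by
  induction cs with
  | nil => rfl
  | cons x xs ih => simp only [XT.liftList, ih, List.map]

theorem XT.substList_eq_map (j : ℕ) (s : XT) (cs : List XT) :
    XT.substList j s cs = cs.map (XT.subst j s) := by
  induction cs with
  | nil => rfl
  | cons x xs ih => simp only [XT.substList, ih, List.map]

theorem WFX.lift_closed {n : ℕ} {t : XT} (h : WFX n t) : ∀ c, WFX n (XT.lift c t) := by
  induction h with
  | var => intro c; simp only [XT.lift]; split_ifs <;> exact WFX.var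
  | const => intro c; exact WFX.const
  | lam _ ih => intro c; exact WFX.lam (ih (c+1))
  | app _ _ iht ihu => intro c; exact WFX.app (iht c) (ihu c)
  | @cconst l a b cs hl _ _ _ iha ihb ihcs =>
      intro c
      simp only [XT.lift]
      refine WFX.cconst hl (iha c) (ihb c) ?_
      rw [XT.liftList_eq_map]
      intro x hx
      obtain ⟨y, hy, rfl⟩ := List.mem_map.1 hx
      exact ihcs y hy c

theorem WFX.subst_closed {n : ℕ} {t : XT} (h : WFX n t) :
    ∀ (j : ℕ) (s : XT), WFX n s → WFX n (XT.subst j s t) := by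
  induction h with
  | var =>
      intro j s hs
      simp only [XT.subst]
      split_ifs <;> first | exact hs | exact WFX.var
  | const => intro j s hs; exact WFX.const
  | lam _ ih => intro j s hs; exact WFX.lam (ih (j+1) _ (hs.lift_closed 0))
  | app _ _ iht ihu => intro j s hs; exact WFX.app (iht j s hs) (ihu j s hs)
  | @cconst l a b cs hl _ _ _ iha ihb ihcs =>
      intro j s hs
      simp only [XT.subst]
      refine WFX.cconst hl (iha j s hs) (ihb j s hs) ?_
      rw [XT.substList_eq_map]
      intro x hx
      obtain ⟨y, hy, rfl⟩ := List.mem_map.1 hx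
      exact ihcs y hy j s hs

theorem WFX.headstep {n : ℕ} {t t' : XT} (hs : XT.HeadStep t t') (h : WFX n t) :
    WFX n t' := by
  induction hs with
  | beta =>
      cases h with
      | app h1 h2 => cases h1 with
          | lam h1' => exact h1'.subst_closed 0 _ h2
  | app _ ih =>
      cases h with
      | app h1 h2 => exact WFX.app (ih h1) h2
  | lam _ ih =>
      cases h with
      | lam h1 => exact WFX.lam (ih h1)

theorem WFX.toXT {n : ℕ} : ∀ t : Term, WFX n t.toXT := by
  intro t
  induction t with
  | var i => exact WFX.var
  | lam t ih => exact WFX.lam ih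
  | app t u iht ihu => exact WFX.app iht ihu

theorem WFX.spine {n : ℕ} {h : XT} (hh : WFX n h) :
    ∀ {cs : List XT}, (∀ c ∈ cs, WFX n c) → WFX n (XT.spine h cs) := by
  intro cs
  induction cs generalizing h with
  | nil => intro _; exact hh
  | cons c cs ih =>
      intro hcs
      exact ih (WFX.app hh (hcs c (by simp))) (fun x hx => hcs x (by simp [hx]))

theorem WFX.spine_inv {n : ℕ} : ∀ {cs : List XT} {h : XT}, WFX n (XT.spine h cs) →
    WFX n h ∧ ∀ c ∈ cs, WFX n c := by
  intro cs
  induction cs with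
  | nil => intro h hw; exact ⟨hw, by simp⟩
  | cons c cs ih =>
      intro h hw
      obtain ⟨happ, hrest⟩ := ih hw
      cases happ with
      | app h1 h2 =>
          refine ⟨h1, ?_⟩
          intro x hx
          rcases List.mem_cons.1 hx with rfl | hx
          · exact h2
          · exact hrest x hx

/-! ### trichotomy for λx-terms -/

theorem XT.spine_concat (h : XT) (es : List XT) (u : XT) :
    XT.spine h (es ++ [u]) = XT.app (XT.spine h es) u := by
  simp [XT.spine, List.foldl_append]

theorem xtri : ∀ M : XT,
    (∃ t u M', M = XT.app t u ∧ XT.HeadStep M M')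
    ∨ (∃ t, M = XT.lam t)
    ∨ (∃ v es, M = XT.spine (XT.var v) es)
    ∨ (∃ m es, M = XT.spine (XT.const m) es)
    ∨ (∃ l a b cs es, M = XT.spine (XT.cconst l a b cs) es) := by
  intro M
  induction M using XT.rec' with
  | hvar i => exact Or.inr (Or.inr (Or.inl ⟨i, [], rfl⟩))
  | hconst m => exact Or.inr (Or.inr (Or.inr (Or.inl ⟨m, [], rfl⟩)))
  | hlam t _ => exact Or.inr (Or.inl ⟨t, rfl⟩)
  | hcc l a b cs _ _ =>
      exact Or.inr (Or.inr (Or.inr (Or.inr ⟨l, a, b, cs, [], rfl⟩)))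
  | happ t u iht _ =>
      rcases iht with ⟨a, b, M', rfl, hstep⟩ | ⟨s, rfl⟩ | ⟨v, es, rfl⟩ | ⟨m, es, rfl⟩
        | ⟨l, a, b, cs, es, rfl⟩
      · exact Or.inl ⟨_, u, _, rfl, XT.HeadStep.app hstep⟩
      · exact Or.inl ⟨_, u, _, rfl, XT.HeadStep.beta⟩
      · exact Or.inr (Or.inr (Or.inl ⟨v, es ++ [u], by rw [XT.spine_concat]⟩))
      · exact Or.inr (Or.inr (Or.inr (Or.inl ⟨m, es ++ [u], by rw [XT.spine_concat]⟩)))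
      · exact Or.inr (Or.inr (Or.inr (Or.inr ⟨l, a, b, cs, es ++ [u],
          by rw [XT.spine_concat]⟩)))

end SO

namespace SO
namespace Term

/-! ### counted head reduction -/

inductive HRN : ℕ → Term → Term → Prop
  | zero : HRN 0 t t
  | succ : HeadStep t u → HRN k u v → HRN (k+1) t v

theorem HRN.tail {k : ℕ} {t u v : Term} (h : HRN k t u) (h2 : HeadStep u v) :
    HRN (k+1) t v := by
  induction h with
  | zero => exact HRN.succ h2 HRN.zero
  | succ h1 _ ih => exact HRN.succ h1 (ih h2)

theorem headred_hrn {t z : Term} (h : HeadRed t z) : ∃ k, HRN k t z := by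
  induction h with
  | refl => exact ⟨0, HRN.zero⟩
  | tail _ h2 ih => obtain ⟨k, hk⟩ := ih; exact ⟨k+1, hk.tail h2⟩

theorem HRN.toHeadRed {k : ℕ} {t z : Term} (h : HRN k t z) : HeadRed t z := by
  induction h with
  | zero => exact .refl
  | succ h1 _ ih => exact Relation.ReflTransGen.head h1 ih

theorem HRN.peel {k : ℕ} {t u z : Term} (hz : IsHNF z) (h : HRN k t z)
    (hs : HeadStep t u) : ∃ k', k = k' + 1 ∧ HRN k' u z := by
  cases h with
  | zero => exact absurd hs (hz u)
  | succ h1 h2 => exact ⟨_, rfl, (HeadStep.det h1 hs) ▸ h2⟩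

theorem HRN.mono' {u z : Term} (hz : IsHNF z) {t : Term} (hr : HeadRed t u) :
    ∀ k, HRN k t z → ∃ k' ≤ k, HRN k' u z := by
  induction hr using Relation.ReflTransGen.head_induction_on with
  | refl => intro k h; exact ⟨k, Nat.le_refl k, h⟩
  | head h1 _ ih =>
      intro k h
      obtain ⟨k1, rfl, hk1⟩ := h.peel hz h1
      obtain ⟨k2, hk2, h2⟩ := ih k1 hk1
      exact ⟨k2, by omega, h2⟩

theorem HRN.mono {k : ℕ} {t u z : Term} (hz : IsHNF z) (h : HRN k t z)
    (hr : HeadRed t u) : ∃ k' ≤ k, HRN k' u z :=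
  HRN.mono' hz hr k h

theorem HRN.lt {k : ℕ} {t u u' z : Term} (hz : IsHNF z) (h : HRN k t z)
    (hs : HeadStep t u) (hr : HeadRed u u') : ∃ k' < k, HRN k' u' z := by
  obtain ⟨k1, rfl, h1⟩ := h.peel hz hs
  obtain ⟨k2, hk2, h2⟩ := h1.mono hz hr
  exact ⟨k2, by omega, h2⟩

theorem hnf_headred_eq {t z : Term} (ht : IsHNF t) (h : HeadRed t z) : t = z := by
  cases h.cases_head with
  | inl h => exact h
  | inr h => obtain ⟨u, hu, _⟩ := h; exact absurd hu (ht u)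

theorem hnf_app_var (f : ℕ) (τ : Term) : IsHNF (app (var f) τ) := by
  intro u h
  cases h

/-! ### head normal spines -/

theorem sp_var_ne_lam (v : ℕ) : ∀ (es : List Term) (t : Term),
    sp (var v) es ≠ lam t := by
  intro es
  induction es using List.reverseRecOn with
  | nil => intro t h; cases h
  | append_singleton es e _ =>
      intro t h
      rw [show sp (var v) (es ++ [e]) = app (sp (var v) es) e by
        simp [sp, List.foldl_append]] at h
      cases h

theorem hnf_sp_var (v : ℕ) : ∀ (es : List Term), IsHNF (sp (var v) es) := by
  intro es
  induction es using List.reverseRecOn with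
  | nil => intro u h; cases h
  | append_singleton es e ih =>
      intro u h
      rw [show sp (var v) (es ++ [e]) = app (sp (var v) es) e by
        simp [sp, List.foldl_append]] at h
      have hne := sp_var_ne_lam v es
      revert h
      generalize hX : sp (var v) es = X
      intro h
      cases h with
      | beta => exact hne _ hX
      | app h2 =>
          rw [← hX] at h2
          exact ih _ h2

theorem sp_var_eq_app {v f : ℕ} {X : Term} : ∀ {es : List Term},
    sp (var v) es = app (var f) X → v = f ∧ es = [X] := by
  intro es
  induction es using List.reverseRecOn with
  | nil => intro h; cases h
  | append_singleton es e _ =>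
      intro h
      rw [show sp (var v) (es ++ [e]) = app (sp (var v) es) e by
        simp [sp, List.foldl_append]] at h
      injection h with h1 h2
      subst h2
      cases es using List.reverseRecOn with
      | nil =>
          injection h1 with h1
          exact ⟨h1.symm ▸ rfl, rfl⟩
      | append_singleton es e' =>
          rw [show sp (var v) (es ++ [e']) = app (sp (var v) es) e' by
            simp [sp, List.foldl_append]] at h1
          cases h1

end Term
end SO
namespace SO
open Term

/-! ### the linking relation and execution sequences -/

def LinkV (n : ℕ) (Vf U' : XT) : Prop :=
  (∃ a b cs, Vf = XT.spine (.app (.app (.const n) a) b) cs ∧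
    (n = 0 → U' = XT.spine b cs) ∧
    ∀ m, n = m + 1 → U' = XT.spine (.app a (.cconst m a b cs)) cs)
  ∨
  (∃ l a b cs ds, l < n ∧ Vf = XT.spine (.cconst l a b cs) ds ∧
    (l = 0 → U' = XT.spine b ds) ∧
    ∀ m, l = m + 1 → U' = XT.spine (.app a (.cconst m a b ds)) ds)

inductive Exec (n : ℕ) : XT → XT → Prop
  | last {M Z} : XT.HeadRed M Z → Exec n M Z
  | step {M Vf U' Z} : XT.HeadRed M Vf → LinkV n Vf U' → Exec n U' Z → Exec n M Z

theorem Exec.prepend {n : ℕ} {M M₁ Z : XT} (h : XT.HeadStep M M₁)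
    (he : Exec n M₁ Z) : Exec n M Z := by
  cases he with
  | last h2 => exact Exec.last (Relation.ReflTransGen.head h h2)
  | step h2 hl he2 => exact Exec.step (Relation.ReflTransGen.head h h2) hl he2

/-! ### the two forward translations -/

def GFrn : ℕ → ℕ → Term → Term → Term := fun _ l A B => Term.app (Term.app (rn l) A) B
def GFrn' : ℕ → ℕ → Term → Term → Term := fun _ l A B => Term.app (Term.app (rn' l) A) B

theorem liftn_of_closed {t : Term} (h : Closed t) : ∀ d, liftn d t = t := by
  intro d
  induction d with
  | zero => rfl
  | succ d ih => show lift 0 (liftn d t) = t; rw [ih, lift_of_closed h]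

theorem hGl_rn : ∀ d l A B c, c ≤ d →
    GFrn (d+1) l (Term.lift c A) (Term.lift c B) = Term.lift c (GFrn d l A B) := by
  intro d l A B c _
  simp only [GFrn, Term.lift, lift_of_closed (closed_rn l)]

theorem hGs_rn : ∀ d l A B (s : Term), Term.subst d (liftn d s) (GFrn (d+1) l A B) =
    GFrn d l (Term.subst d (liftn d s) A) (Term.subst d (liftn d s) B) := by
  intro d l A B s
  simp only [GFrn, Term.subst, subst_of_closed (closed_rn l)]

theorem hGl_rn' : ∀ d l A B c, c ≤ d →
    GFrn' (d+1) l (Term.lift c A) (Term.lift c B) = Term.lift c (GFrn' d l A B) := by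
  intro d l A B c _
  simp only [GFrn', Term.lift, lift_of_closed (closed_rn' l)]

theorem hGs_rn' : ∀ d l A B (s : Term), Term.subst d (liftn d s) (GFrn' (d+1) l A B) =
    GFrn' d l (Term.subst d (liftn d s) A) (Term.subst d (liftn d s) B) := by
  intro d l A B s
  simp only [GFrn', Term.subst, subst_of_closed (closed_rn' l)]

theorem tr_inj : ∀ (S : XT) (d : ℕ),
    trG rn GFrn d S = trG rn' GFrn' d S → ∃ t : Term, S = t.toXT := by
  intro S
  induction S using XT.rec' with
  | hvar i => intro d _; exact ⟨Term.var i, rfl⟩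
  | hconst m =>
      intro d h
      exfalso
      simp only [trG, liftn_of_closed (closed_rn m), liftn_of_closed (closed_rn' m)] at h
      exact rn_ne_rn' m h
  | hlam t ih =>
      intro d h
      simp only [trG, Term.lam.injEq] at h
      obtain ⟨t', rfl⟩ := ih (d+1) h
      exact ⟨Term.lam t', rfl⟩
  | happ t u iht ihu =>
      intro d h
      simp only [trG, Term.app.injEq] at h
      obtain ⟨t', rfl⟩ := iht d h.1
      obtain ⟨u', rfl⟩ := ihu d h.2
      exact ⟨Term.app t' u', rfl⟩
  | hcc l a b cs iha ihb =>
      intro d h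
      exfalso
      simp only [trG, GFrn, GFrn', Term.app.injEq] at h
      exact rn_ne_rn' l h.1.1

theorem rn_two : ∀ n, ∃ b, rn n = Term.lam (Term.lam b) := by
  intro n
  cases n with
  | zero => exact ⟨_, rfl⟩
  | succ n => exact ⟨_, rfl⟩

/-! ### the main forward construction -/

theorem forward_main (n f : ℕ) (τ : Term) :
    ∀ k (M : XT), WFX n M →
      HRN k (trG rn GFrn 0 M) (Term.app (Term.var f) τ) →
      HeadRed (trG rn' GFrn' 0 M) (Term.app (Term.var f) τ) →
      ∃ S, Exec n M (XT.app (XT.var f) S) ∧ S = τ.toXT := by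
  intro k
  induction k using Nat.strong_induction_on with
  | _ k ih =>
  intro M hwf hφ hψ
  have hE := hnf_app_var f τ
  rcases xtri M with ⟨t, u, M', rfl, hstep⟩ | ⟨t, rfl⟩ | ⟨v, es, rfl⟩
    | ⟨m, es, rfl⟩ | ⟨l, a, b, cs, es, rfl⟩
  · -- M is an application with a head step
    have hMnl : ∀ s, XT.app t u ≠ XT.lam s := by intro s h; cases h
    have hsφ := (trG.headstep (F := rn) (G := GFrn) hGl_rn hGs_rn hstep hMnl).toHeadStep
    have hsψ := (trG.headstep (F := rn') (G := GFrn') hGl_rn' hGs_rn' hstep hMnl).toHeadStep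
    obtain ⟨k', rfl, hφ'⟩ := hφ.peel hE hsφ
    have hψ' := HeadRed.hnf_absorb hE (Relation.ReflTransGen.single hsψ) hψ
    obtain ⟨S, he, hS⟩ := ih k' (by omega) M' (WFX.headstep hstep hwf) hφ' hψ'
    exact ⟨S, he.prepend hstep, hS⟩
  · -- M is an abstraction : impossible
    exfalso
    obtain ⟨t', ht', _⟩ := HeadRed.lam_shape hφ.toHeadRed
      (t := trG rn GFrn 1 t) rfl
    simp at ht'
  · -- M is a variable-headed spine : the end
    have hsp : trG rn GFrn 0 (XT.spine (XT.var v) es)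
        = sp (Term.var v) (es.map (trG rn GFrn 0)) := trG.spine_comm es _ 0
    have h1 : sp (Term.var v) (es.map (trG rn GFrn 0)) = Term.app (Term.var f) τ := by
      refine hnf_headred_eq (hnf_sp_var v _) ?_
      rw [← hsp]
      exact hφ.toHeadRed
    obtain ⟨hvf, hes⟩ := sp_var_eq_app h1
    have hvf' : f = v := hvf.symm
    subst hvf'
    cases es with
    | nil => simp at hes
    | cons S es' =>
        cases es' with
        | cons x xs => simp at hes
        | nil =>
            simp only [List.map, List.cons.injEq, and_true] at hes
            have hφS : trG rn GFrn 0 S = τ := hes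
            have hsψ : trG rn' GFrn' 0 (XT.spine (XT.var f) [S])
                = Term.app (Term.var f) (trG rn' GFrn' 0 S) := rfl
            have h2 : Term.app (Term.var f) (trG rn' GFrn' 0 S)
                = Term.app (Term.var f) τ := by
              refine hnf_headred_eq (hnf_app_var f _) ?_
              rw [← hsψ]
              exact hψ
            have hψS : trG rn' GFrn' 0 S = τ := by injection h2
            obtain ⟨t0, rfl⟩ := tr_inj S 0 (by rw [hφS, hψS])
            have : t0 = τ := by rw [← trG.toXT_id (F := rn) (G := GFrn) t0 0, hφS]
            subst this
            exact ⟨t0.toXT, Exec.last Relation.ReflTransGen.refl, rfl⟩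
  · -- M is a const-headed spine
    obtain ⟨hhd, hmem⟩ := WFX.spine_inv hwf
    cases hhd
    cases es with
    | nil =>
        exfalso
        obtain ⟨body, hbody⟩ := rn_two n
        have heq : trG rn GFrn 0 (XT.spine (XT.const n) []) = Term.lam (Term.lam body) := by
          show liftn 0 (rn n) = _
          rw [show liftn 0 (rn n) = rn n from rfl, hbody]
        obtain ⟨t', ht', _⟩ := HeadRed.lam_shape hφ.toHeadRed heq
        simp at ht'
    | cons a es₂ =>
      cases es₂ with
      | nil =>
          exfalso
          obtain ⟨body, hbody⟩ := rn_two n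
          have hstep : HeadStep (trG rn GFrn 0 (XT.spine (XT.const n) [a]))
              (Term.lam (Term.subst 1 (Term.lift 0 (trG rn GFrn 0 a)) body)) := by
            show HeadStep (Term.app (liftn 0 (rn n)) (trG rn GFrn 0 a)) _
            rw [show liftn 0 (rn n) = rn n from rfl, hbody]
            have := @HeadStep.beta (Term.lam body) (trG rn GFrn 0 a)
            simpa [Term.subst] using this
          obtain ⟨k', rfl, hφ'⟩ := hφ.peel hE hstep
          obtain ⟨t', ht', _⟩ := HeadRed.lam_shape hφ'.toHeadRed rfl
          simp at ht'
      | cons b cs =>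
        have ha : WFX n a := hmem a (by simp)
        have hb : WFX n b := hmem b (by simp)
        have hcs : ∀ c ∈ cs, WFX n c := fun c hc => hmem c (by simp [hc])
        have hsp : XT.spine (XT.const n) (a :: b :: cs)
            = XT.spine (XT.app (XT.app (XT.const n) a) b) cs := rfl
        set A := trG rn GFrn 0 a with hA
        set B := trG rn GFrn 0 b with hB
        set A' := trG rn' GFrn' 0 a with hA'
        set B' := trG rn' GFrn' 0 b with hB'
        have hφM : trG rn GFrn 0 (XT.spine (XT.const n) (a :: b :: cs))
            = sp (Term.app (Term.app (rn n) A) B) (cs.map (trG rn GFrn 0)) := by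
          rw [hsp, trG.spine_comm]; rfl
        have hψM : trG rn' GFrn' 0 (XT.spine (XT.const n) (a :: b :: cs))
            = sp (Term.app (Term.app (rn' n) A') B') (cs.map (trG rn' GFrn' 0)) := by
          rw [hsp, trG.spine_comm]; rfl
        cases n with
        | zero =>
            have hlink : LinkV 0 (XT.spine (XT.const 0) (a :: b :: cs)) (XT.spine b cs) :=
              Or.inl ⟨a, b, cs, hsp, fun _ => rfl, fun m' hm' => by omega⟩
            obtain ⟨X, hX1, hX2⟩ := rn0_red A B (cs.map (trG rn GFrn 0))
            rw [hφM] at hφ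
            obtain ⟨k', hk', hφ'⟩ := hφ.lt hE hX1 hX2
            rw [← trG.spine_comm] at hφ'
            obtain ⟨Y, hY1, hY2⟩ := rn'0_red A' B' (cs.map (trG rn' GFrn' 0))
            rw [hψM] at hψ
            have hψ' := HeadRed.hnf_absorb hE
              (Relation.ReflTransGen.head hY1 hY2) hψ
            rw [← trG.spine_comm] at hψ'
            obtain ⟨S, he, hS⟩ := ih k' hk' _ (WFX.spine hb hcs) hφ' hψ'
            exact ⟨S, Exec.step Relation.ReflTransGen.refl hlink he, hS⟩
        | succ m =>
            have hlink : LinkV (m+1) (XT.spine (XT.const (m+1)) (a :: b :: cs))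
                (XT.spine (XT.app a (XT.cconst m a b cs)) cs) := by
              refine Or.inl ⟨a, b, cs, hsp, fun h0 => by omega, fun m' hm' => ?_⟩
              have hmm : m' = m := by omega
              subst hmm
              rfl
            obtain ⟨X, hX1, hX2⟩ := rnS_red m A B (cs.map (trG rn GFrn 0))
            rw [hφM] at hφ
            obtain ⟨k', hk', hφ'⟩ := hφ.lt hE hX1 hX2
            have hφU : trG rn GFrn 0 (XT.spine (XT.app a (XT.cconst m a b cs)) cs)
                = sp (Term.app A (Term.app (Term.app (rn m) A) B))
                    (cs.map (trG rn GFrn 0)) := by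
              rw [trG.spine_comm]; rfl
            rw [← hφU] at hφ'
            obtain ⟨Y, hY1, hY2⟩ := rn'S_red m A' B' (cs.map (trG rn' GFrn' 0))
            rw [hψM] at hψ
            have hψ' := HeadRed.hnf_absorb hE
              (Relation.ReflTransGen.head hY1 hY2) hψ
            have hψU : trG rn' GFrn' 0 (XT.spine (XT.app a (XT.cconst m a b cs)) cs)
                = sp (Term.app A' (Term.app (Term.app (rn' m) A') B'))
                    (cs.map (trG rn' GFrn' 0)) := by
              rw [trG.spine_comm]; rfl
            rw [← hψU] at hψ'
            have hwfU : WFX (m+1) (XT.spine (XT.app a (XT.cconst m a b cs)) cs) :=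
              WFX.spine (WFX.app ha (WFX.cconst (by omega) ha hb hcs)) hcs
            obtain ⟨S, he, hS⟩ := ih k' hk' _ hwfU hφ' hψ'
            exact ⟨S, Exec.step Relation.ReflTransGen.refl hlink he, hS⟩
  · -- M is a cconst-headed spine
    obtain ⟨hhd, hmem⟩ := WFX.spine_inv hwf
    obtain ⟨hl, ha, hb, hcs⟩ : l < n ∧ WFX n a ∧ WFX n b ∧ ∀ c ∈ cs, WFX n c := by
      cases hhd with
      | cconst h1 h2 h3 h4 => exact ⟨h1, h2, h3, h4⟩
    set A := trG rn GFrn 0 a with hA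
    set B := trG rn GFrn 0 b with hB
    set A' := trG rn' GFrn' 0 a with hA'
    set B' := trG rn' GFrn' 0 b with hB'
    have hφM : trG rn GFrn 0 (XT.spine (XT.cconst l a b cs) es)
        = sp (Term.app (Term.app (rn l) A) B) (es.map (trG rn GFrn 0)) := by
      rw [trG.spine_comm]; rfl
    have hψM : trG rn' GFrn' 0 (XT.spine (XT.cconst l a b cs) es)
        = sp (Term.app (Term.app (rn' l) A') B') (es.map (trG rn' GFrn' 0)) := by
      rw [trG.spine_comm]; rfl
    cases l with
    | zero =>
        have hlink : LinkV n (XT.spine (XT.cconst 0 a b cs) es) (XT.spine b es) :=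
          Or.inr ⟨0, a, b, cs, es, hl, rfl, fun _ => rfl, fun m' hm' => by omega⟩
        obtain ⟨X, hX1, hX2⟩ := rn0_red A B (es.map (trG rn GFrn 0))
        rw [hφM] at hφ
        obtain ⟨k', hk', hφ'⟩ := hφ.lt hE hX1 hX2
        rw [← trG.spine_comm] at hφ'
        obtain ⟨Y, hY1, hY2⟩ := rn'0_red A' B' (es.map (trG rn' GFrn' 0))
        rw [hψM] at hψ
        have hψ' := HeadRed.hnf_absorb hE (Relation.ReflTransGen.head hY1 hY2) hψ
        rw [← trG.spine_comm] at hψ'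
        obtain ⟨S, he, hS⟩ := ih k' hk' _ (WFX.spine hb hmem) hφ' hψ'
        exact ⟨S, Exec.step Relation.ReflTransGen.refl hlink he, hS⟩
    | succ m =>
        have hlink : LinkV n (XT.spine (XT.cconst (m+1) a b cs) es)
            (XT.spine (XT.app a (XT.cconst m a b es)) es) := by
          refine Or.inr ⟨m+1, a, b, cs, es, hl, rfl, fun h0 => by omega, fun m' hm' => ?_⟩
          have : m' = m := by omega
          subst this
          rfl
        obtain ⟨X, hX1, hX2⟩ := rnS_red m A B (es.map (trG rn GFrn 0))
        rw [hφM] at hφ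
        obtain ⟨k', hk', hφ'⟩ := hφ.lt hE hX1 hX2
        have hφU : trG rn GFrn 0 (XT.spine (XT.app a (XT.cconst m a b es)) es)
            = sp (Term.app A (Term.app (Term.app (rn m) A) B))
                (es.map (trG rn GFrn 0)) := by
          rw [trG.spine_comm]; rfl
        rw [← hφU] at hφ'
        obtain ⟨Y, hY1, hY2⟩ := rn'S_red m A' B' (es.map (trG rn' GFrn' 0))
        rw [hψM] at hψ
        have hψ' := HeadRed.hnf_absorb hE (Relation.ReflTransGen.head hY1 hY2) hψ
        have hψU : trG rn' GFrn' 0 (XT.spine (XT.app a (XT.cconst m a b es)) es)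
            = sp (Term.app A' (Term.app (Term.app (rn' m) A') B'))
                (es.map (trG rn' GFrn' 0)) := by
          rw [trG.spine_comm]; rfl
        rw [← hψU] at hψ'
        have hwfU : WFX n (XT.spine (XT.app a (XT.cconst m a b es)) es) :=
          WFX.spine (WFX.app ha (WFX.cconst (by omega) ha hb hmem)) hmem
        obtain ⟨S, he, hS⟩ := ih k' hk' _ hwfU hφ' hψ'
        exact ⟨S, Exec.step Relation.ReflTransGen.refl hlink he, hS⟩

end SO
namespace SO
open Term

theorem exec_pack {n : ℕ} {M Z : XT} (h : Exec n M Z) :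
    ∃ (r : ℕ) (U V : ℕ → XT), 1 ≤ r ∧ U 1 = M ∧ V r = Z ∧
      (∀ i, 1 ≤ i → i ≤ r → XT.HeadRed (U i) (V i)) ∧
      (∀ i, 1 ≤ i → i < r → LinkV n (V i) (U (i+1))) := by
  induction h with
  | @last M Z h =>
      exact ⟨1, fun _ => M, fun _ => Z, Nat.le_refl 1, rfl, rfl,
        fun i _ _ => h, fun i h1 h2 => absurd h2 (by omega)⟩
  | @step M Vf U' Z hred hlink hexec ih =>
      obtain ⟨r, U, V, hr, hU1, hVr, hheads, hlinks⟩ := ih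
      refine ⟨r+1, fun i => if i ≤ 1 then M else U (i-1),
        fun i => if i ≤ 1 then Vf else V (i-1), by omega, by simp, ?_, ?_, ?_⟩
      · show (if r+1 ≤ 1 then Vf else V (r+1-1)) = Z
        rw [if_neg (by omega : ¬ r+1 ≤ 1), Nat.add_sub_cancel, hVr]
      · intro i h1 h2
        by_cases hi : i ≤ 1
        · simp only [if_pos hi]; exact hred
        · simp only [if_neg hi]; exact hheads (i-1) (by omega) (by omega)
      · intro i h1 h2
        by_cases hi : i ≤ 1
        · have hi1 : i = 1 := by omega
          subst hi1
          simp only [if_pos (Nat.le_refl 1), if_neg (by omega : ¬ (1:ℕ)+1 ≤ 1)]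
          rw [show (1:ℕ)+1-1 = 1 from rfl, hU1]
          exact hlink
        · simp only [if_neg hi, if_neg (by omega : ¬ i+1 ≤ 1)]
          have e : i+1-1 = (i-1)+1 := by omega
          rw [e]
          exact hlinks (i-1) (by omega) (by omega)

theorem isStorage_forward {T : Term} (h : IsStorageOp T) : StorageSeqx T := by
  intro n f
  obtain ⟨τ, hτc, hτe, hmain⟩ := h.2 n
  have hφred : HeadRed (Term.app (Term.app T (rn n)) (Term.var f))
      (Term.app (Term.var f) τ) :=
    hmain (rn n) f (rn_betaS_church n).toBetaEq ((closed_rn n) f)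
  have hψred : HeadRed (Term.app (Term.app T (rn' n)) (Term.var f))
      (Term.app (Term.var f) τ) :=
    hmain (rn' n) f (rn'_betaS_church n).toBetaEq ((closed_rn' n) f)
  have hφU1 : trG rn GFrn 0 (XT.app (XT.app T.toXT (XT.const n)) (XT.var f))
      = Term.app (Term.app T (rn n)) (Term.var f) := by
    show Term.app (Term.app (trG rn GFrn 0 T.toXT) (liftn 0 (rn n))) (Term.var f) = _
    rw [trG.toXT_id]
    rfl
  have hψU1 : trG rn' GFrn' 0 (XT.app (XT.app T.toXT (XT.const n)) (XT.var f))
      = Term.app (Term.app T (rn' n)) (Term.var f) := by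
    show Term.app (Term.app (trG rn' GFrn' 0 T.toXT) (liftn 0 (rn' n))) (Term.var f) = _
    rw [trG.toXT_id]
    rfl
  obtain ⟨k, hk⟩ := headred_hrn hφred
  rw [← hφU1] at hk
  rw [← hψU1] at hψred
  have hwf : WFX n (XT.app (XT.app T.toXT (XT.const n)) (XT.var f)) :=
    WFX.app (WFX.app (WFX.toXT T) WFX.const) WFX.var
  obtain ⟨S, hexec, rfl⟩ := forward_main n f τ k _ hwf hk hψred
  obtain ⟨r, U, V, hr, hU1, hVr, hheads, hlinks⟩ := exec_pack hexec
  exact ⟨r, U, V, τ, hr, hτc, hτe, hU1, hVr, hheads, hlinks⟩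

end SO
namespace SO
namespace Term

/-! ### chain extraction from a term β-equivalent to a Church numeral -/

theorem chain_exists : ∀ (j : ℕ) (w : Term),
    St w (iterApp (Term.var 1) j (Term.var 0)) →
    ∃ c : ℕ → Term, c 0 = w ∧
      (∀ i < j, Ws (c i) (Term.app (Term.var 1) (c (i+1)))) ∧
      Ws (c j) (Term.var 0) := by
  intro j
  induction j with
  | zero =>
      intro w h
      exact ⟨fun _ => w, rfl, fun i hi => absurd hi (by omega), st_inv_var h⟩
  | succ j ih =>
      intro w h
      obtain ⟨p, q, hw, hp, hq⟩ := st_inv_app h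
      have hp' : Ws p (Term.var 1) := st_inv_var hp
      have hw' : Ws w (Term.app (Term.var 1) q) :=
        hw.trans (hp'.app_congr q)
      obtain ⟨c', h0, hstep, hend⟩ := ih q hq
      refine ⟨fun i => if i = 0 then w else c' (i-1), rfl, ?_, ?_⟩
      · intro i hi
        by_cases hi0 : i = 0
        · subst hi0
          simp only [if_pos rfl, if_neg (by omega : ¬ (0:ℕ)+1 = 0)]
          rw [show (0:ℕ)+1-1 = 0 from rfl, h0]
          exact hw'
        · simp only [if_neg hi0, if_neg (by omega : ¬ i+1 = 0)]
          have e : i+1-1 = (i-1)+1 := by omega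
          rw [e]
          exact hstep (i-1) (by omega)
      · simp only [if_neg (by omega : ¬ j+1 = 0)]
        rw [Nat.add_sub_cancel]
        exact hend

/-! ### weak-head computations for the backward translation -/

theorem sub2_ws {w w' : Term} (h : Ws w w') (A B : Term) :
    Ws (sub2 A B w) (sub2 A B w') :=
  (h.subst_closed 1 (lift 0 A)).subst_closed 0 B

theorem app2_ws {θ p₁ p₂ : Term} (h1 : Ws θ (Term.lam p₁)) (h2 : Ws p₁ (Term.lam p₂))
    (A B : Term) (cs : List Term) :
    Ws (sp (Term.app (Term.app θ A) B) cs) (sp (sub2 A B p₂) cs) := by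
  refine Ws.sp_congr ?_ cs
  have s1 : Ws (Term.app (Term.app θ A) B) (Term.app (Term.app (Term.lam p₁) A) B) :=
    (h1.app_congr A).app_congr B
  have s2 : W (Term.app (Term.app (Term.lam p₁) A) B) (Term.app (subst 0 A p₁) B) :=
    W.app W.beta
  have s3 : Ws (subst 0 A p₁) (subst 0 A (Term.lam p₂)) := h2.subst_closed 0 A
  have e3 : subst 0 A (Term.lam p₂) = Term.lam (subst 1 (lift 0 A) p₂) := by
    simp [subst]
  rw [e3] at s3
  have s4 : Ws (Term.app (subst 0 A p₁) B)
      (Term.app (Term.lam (subst 1 (lift 0 A) p₂)) B) := s3.app_congr B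
  have s5 : W (Term.app (Term.lam (subst 1 (lift 0 A) p₂)) B) (sub2 A B p₂) := W.beta
  exact ((s1.tail s2).trans s4).tail s5

end Term

open Term

/-! ### the backward translation -/

def GB (c : ℕ → Term) (n : ℕ) : ℕ → ℕ → Term → Term → Term :=
  fun d l A B => sub2 A B (liftn2 d (c (n - l)))

theorem hGl_GB (c : ℕ → Term) (n : ℕ) : ∀ d l A B c', c' ≤ d →
    GB c n (d+1) l (Term.lift c' A) (Term.lift c' B) = Term.lift c' (GB c n d l A B) := by
  intro d l A B c' h
  simp only [GB]
  rw [sub2_lift, lift_liftn2 h]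

theorem hGs_GB (c : ℕ → Term) (n : ℕ) :
    ∀ d l A B (s : Term), Term.subst d (liftn d s) (GB c n (d+1) l A B) =
      GB c n d l (Term.subst d (liftn d s) A) (Term.subst d (liftn d s) B) := by
  intro d l A B s
  simp only [GB]
  rw [sub2_subst, subst_liftn2]

theorem XT.spine_ne_lam : ∀ (cs : List XT) (h : XT), (∀ t, h ≠ XT.lam t) →
    ∀ t, XT.spine h cs ≠ XT.lam t := by
  intro cs
  induction cs with
  | nil => intro h hh t; exact hh t
  | cons c cs ih =>
      intro h _ t
      exact ih (XT.app h c) (fun s hs => by cases hs) t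

/-! ### gluing the λx-sequence into an actual head reduction -/

theorem seq_glue {T τ' : Term} {n f r : ℕ} {U V : ℕ → XT}
    (hr : 1 ≤ r)
    (hU1 : U 1 = XT.app (XT.app T.toXT (XT.const n)) (XT.var f))
    (hVr : V r = XT.app (XT.var f) τ'.toXT)
    (hheads : ∀ i, 1 ≤ i → i ≤ r → XT.HeadRed (U i) (V i))
    (hlinks : ∀ i, 1 ≤ i → i < r → LinkV n (V i) (U (i+1)))
    (θ : Term) (hθ : BetaEq θ (church n)) :
    HeadRed (Term.app (Term.app T θ) (Term.var f)) (Term.app (Term.var f) τ') := by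
  -- extract the weak-head chain of θ
  have hst : St θ (church n) := std_main (betaEq_church hθ)
  obtain ⟨p₁, hθ1, hst1⟩ := st_inv_lam hst
  obtain ⟨p₂, hθ2, hst2⟩ := st_inv_lam hst1
  obtain ⟨c, hc0, hcstep, hcend⟩ := chain_exists n p₂ hst2
  -- the translation
  set Φ := trG (fun _ => θ) (GB c n) with hΦ
  have hGl := hGl_GB c n
  have hGs := hGs_GB c n
  have hsp' : ∀ (h : XT) (cs : List XT), Φ 0 (XT.spine h cs) = sp (Φ 0 h) (cs.map (Φ 0)) :=
    fun h cs => trG.spine_comm cs h 0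
  have hid : ∀ t : Term, Φ 0 t.toXT = t := fun t => trG.toXT_id t 0
  -- each Uᵢ ≻ Vᵢ translates
  have hnl : ∀ i, 1 ≤ i → i < r → ∀ t, V i ≠ XT.lam t := by
    intro i h1 h2
    rcases hlinks i h1 h2 with ⟨a, b, cs, hV, _, _⟩ | ⟨l, a, b, cs, ds, _, hV, _, _⟩
    · rw [hV]; exact XT.spine_ne_lam cs _ (fun s hs => by cases hs)
    · rw [hV]; exact XT.spine_ne_lam ds _ (fun s hs => by cases hs)
  -- the linking steps translate
  have hlink_red : ∀ i, 1 ≤ i → i < r →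
      HeadRed (Φ 0 (V i)) (Φ 0 (U (i+1))) := by
    intro i h1 h2
    rcases hlinks i h1 h2 with ⟨a, b, cs, hV, hz, hsu⟩
      | ⟨l, a, b, cs, ds, hl, hV, hz, hsu⟩
    · -- const-headed checkpoint
      set A := Φ 0 a with hA
      set B := Φ 0 b with hB
      have hVi : Φ 0 (V i) = sp (Term.app (Term.app θ A) B) (cs.map (Φ 0)) := by
        rw [hV, hsp']; rfl
      have base : Ws (sp (Term.app (Term.app θ A) B) (cs.map (Φ 0)))
          (sp (sub2 A B (c 0)) (cs.map (Φ 0))) := by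
        rw [hc0]
        exact app2_ws hθ1 hθ2 A B _
      cases n with
      | zero =>
          rw [hz rfl]
          have hend0 : Ws (c 0) (Term.var 0) := hcend
          have h2' : Ws (sub2 A B (c 0)) B := by
            have := sub2_ws hend0 A B
            rwa [sub2_var0] at this
          have hUi : Φ 0 (XT.spine b cs) = sp B (cs.map (Φ 0)) := by
            rw [hsp']
          rw [hVi, hUi]
          exact Ws.toHeadRed (base.trans (h2'.sp_congr _))
      | succ m =>
          rw [hsu m rfl]
          have hstep0 : Ws (c 0) (Term.app (Term.var 1) (c 1)) := hcstep 0 (by omega)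
          have h2' : Ws (sub2 A B (c 0)) (Term.app A (sub2 A B (c 1))) := by
            have := sub2_ws hstep0 A B
            rwa [sub2_app, sub2_var1] at this
          have hUi : Φ 0 (XT.spine (XT.app a (XT.cconst m a b cs)) cs)
              = sp (Term.app A (sub2 A B (c 1))) (cs.map (Φ 0)) := by
            rw [hsp']
            show sp (Term.app A (GB c (m+1) 0 m A B)) _ = _
            simp only [GB, liftn2]
            rw [show m+1-m = 1 from by omega]
          rw [hVi, hUi]
          exact Ws.toHeadRed (base.trans (h2'.sp_congr _))
    · -- cconst-headed checkpoint
      set A := Φ 0 a with hA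
      set B := Φ 0 b with hB
      have hVi : Φ 0 (V i) = sp (sub2 A B (c (n - l))) (ds.map (Φ 0)) := by
        rw [hV, hsp']
        show sp (GB c n 0 l A B) _ = _
        simp only [GB, liftn2]
      cases l with
      | zero =>
          rw [hz rfl]
          have hce : Ws (c (n - 0)) (Term.var 0) := by rw [Nat.sub_zero]; exact hcend
          have h2' : Ws (sub2 A B (c (n - 0))) B := by
            have := sub2_ws hce A B
            rwa [sub2_var0] at this
          have hUi : Φ 0 (XT.spine b ds) = sp B (ds.map (Φ 0)) := by
            rw [hsp']
          rw [hVi, hUi]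
          exact (h2'.sp_congr _).toHeadRed
      | succ m =>
          rw [hsu m rfl]
          have hlt : n - (m+1) < n := by omega
          have hstep0 : Ws (c (n - (m+1))) (Term.app (Term.var 1) (c (n - (m+1) + 1))) :=
            hcstep _ hlt
          have e : n - (m+1) + 1 = n - m := by omega
          rw [e] at hstep0
          have h2' : Ws (sub2 A B (c (n - (m+1)))) (Term.app A (sub2 A B (c (n - m)))) := by
            have := sub2_ws hstep0 A B
            rwa [sub2_app, sub2_var1] at this
          have hUi : Φ 0 (XT.spine (XT.app a (XT.cconst m a b ds)) ds)
              = sp (Term.app A (sub2 A B (c (n - m)))) (ds.map (Φ 0)) := by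
            rw [hsp']
            show sp (Term.app A (GB c n 0 m A B)) _ = _
            simp only [GB, liftn2]
          rw [hVi, hUi]
          exact (h2'.sp_congr _).toHeadRed
  -- glue everything
  have hloop : ∀ d i, 1 ≤ i → i + d = r → HeadRed (Φ 0 (U i)) (Φ 0 (V r)) := by
    intro d
    induction d with
    | zero =>
        intro i h1 h2
        have : i = r := by omega
        subst this
        refine Ws.toHeadRed (trG.headred (F := fun _ => θ) hGl hGs
          (hheads i h1 (Nat.le_refl i)) ?_)
        intro t ht
        rw [hVr] at ht
        cases ht
    | succ d ih =>
        intro i h1 h2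
        have hir : i < r := by omega
        have s1 : HeadRed (Φ 0 (U i)) (Φ 0 (V i)) :=
          Ws.toHeadRed (trG.headred (F := fun _ => θ) hGl hGs
            (hheads i h1 (by omega)) (hnl i h1 hir))
        exact (s1.trans (hlink_red i h1 hir)).trans (ih (i+1) (by omega) (by omega))
  have hmain := hloop (r-1) 1 (Nat.le_refl 1) (by omega)
  have hU1' : Φ 0 (U 1) = Term.app (Term.app T θ) (Term.var f) := by
    rw [hU1]
    show Term.app (Term.app (Φ 0 T.toXT) (liftn 0 θ)) (Term.var f) = _
    rw [hid]
    rfl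
  have hVr' : Φ 0 (V r) = Term.app (Term.var f) τ' := by
    rw [hVr]
    show Term.app (Term.var f) (Φ 0 τ'.toXT) = _
    rw [hid]
  rwa [hU1', hVr'] at hmain

end SO
namespace SO
open Term

theorem isStorage_backward {T : Term} (hT : Closed T) (hs : StorageSeqx T) :
    IsStorageOp T := by
  refine ⟨hT, fun n => ?_⟩
  obtain ⟨r0, U0, V0, τ0, hr0, hτc0, hτe0, hU10, hV0, hh0, hl0⟩ := hs n 0
  have hglue0 : ∀ θ, BetaEq θ (church n) →
      HeadRed (Term.app (Term.app T θ) (Term.var 0)) (Term.app (Term.var 0) τ0) :=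
    fun θ hθ => seq_glue hr0 hU10 hV0 hh0 hl0 θ hθ
  refine ⟨τ0, hτc0, hτe0, ?_⟩
  intro θ f hθ _hfree
  obtain ⟨r1, U1, V1, τ1, hr1, hτc1, hτe1, hU11, hV11, hh1, hl1⟩ := hs n f
  have hglue1 : ∀ θ', BetaEq θ' (church n) →
      HeadRed (Term.app (Term.app T θ') (Term.var f)) (Term.app (Term.var f) τ1) :=
    fun θ' hθ' => seq_glue hr1 hU11 hV11 hh1 hl1 θ' hθ'
  have hcf : HeadRed (Term.app (Term.app T (church n)) (Term.var f))
      (Term.app (Term.var f) τ1) := hglue1 (church n) (Relation.EqvGen.refl _)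
  have hc0 : HeadRed (Term.app (Term.app T (church n)) (Term.var 0))
      (Term.app (Term.var 0) τ0) := hglue0 (church n) (Relation.EqvGen.refl _)
  have hcf' := hcf.subst_closed f (Term.var 0)
  have e1 : subst f (Term.var 0) (Term.app (Term.app T (church n)) (Term.var f))
      = Term.app (Term.app T (church n)) (Term.var 0) := by
    show Term.app (Term.app (subst f (Term.var 0) T) (subst f (Term.var 0) (church n)))
        (subst f (Term.var 0) (Term.var f)) = _
    rw [subst_of_closed hT, subst_of_closed (closed_church n)]
    congr 1
    simp [subst]
  have e2 : subst f (Term.var 0) (Term.app (Term.var f) τ1)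
      = Term.app (Term.var 0) τ1 := by
    show Term.app (subst f (Term.var 0) (Term.var f)) (subst f (Term.var 0) τ1) = _
    rw [subst_of_closed hτc1]
    congr 1
    simp [subst]
  rw [e1, e2] at hcf'
  have heq : Term.app (Term.var 0) τ1 = Term.app (Term.var 0) τ0 :=
    hnf_headred_eq (hnf_app_var 0 τ1)
      (HeadRed.hnf_absorb (hnf_app_var 0 τ0) hcf' hc0)
  have hττ : τ1 = τ0 := by injection heq
  exact hττ ▸ hglue1 θ hθ

end SO

/-- A closed λ-term `T` is a storage operator if and only if, for every `n ≥ 0`,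
there is a finite sequence of head reductions of λx-terms as described
in `SO.StorageSeqx`. -/
theorem isStorageOp_iff_storageSeqx (T : SO.Term) (hT : Closed T) :
    IsStorageOp T ↔ SO.StorageSeqx T :=
  ⟨SO.isStorage_forward, SO.isStorage_backward hT⟩
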